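/- arXiv:2006.00541 — 4 statements merged into one kernel-verified Lean document; each statement's English description precedes it below -/
import Mathlib

section
/- Let Γ ⊂ ℚ* be a finitely generated subgroup and m ≥ 1. Then tildeΓ(m) admits the following description: if 2 ∤ m, tildeΓ(m) = {(ℚ*)^{m₂}} is trivial; if v₂(m) = 1, tildeΓ(m) = {γ ∈ Γ(2) : γ' ≡ 1 mod 4}; if v₂(m) = 2, tildeΓ(m) = {γ ∈ Γ(4) : either γ' = γ₀² with γ₀ odd, or γ' = −γ₀² with γ₀ even (γ₀ a squarefree positive integer)}; if v₂(m) ≥ 3, tildeΓ(m) = {γ ∈ Γ(m₂)[2] : the class γ consists of positive rationals}. -/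
/- Common definitions: finitely generated multiplicative subgroups `Γ ⊆ ℚˣ`,
the quotients `Γ(n) = Γ·(ℚ*)ⁿ/(ℚ*)ⁿ`, the invariants `δ(γ)`, the group `tildeΓ(m)`,
the constants `A(Γ,m)` and `B_{Γ,k}`, and the density `ρ(Γ,m)`. -/

open scoped Classical

noncomputable section

/-- The subgroup `(ℚˣ)ⁿ` of `n`-th powers in `ℚˣ`. -/
def powSubgroup (n : ℕ) : Subgroup ℚˣ := (powMonoidHom n : ℚˣ →* ℚˣ).range

/-- `Γ(n)`: the image of `Γ` in `ℚˣ/(ℚˣ)ⁿ`. -/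
def GammaMod (Γ : Subgroup ℚˣ) (n : ℕ) : Subgroup (ℚˣ ⧸ powSubgroup n) :=
  Γ.map (QuotientGroup.mk' (powSubgroup n))

/-- The unit of `ℚˣ` determined by a nonzero integer (junk value `1` at `0`). -/
def intUnit (b : ℤ) : ℚˣ := if h : (b : ℚ) = 0 then 1 else Units.mk0 (b : ℚ) h

/-- The unit of `ℚˣ` determined by a nonzero natural number. -/
def natUnit (b : ℕ) : ℚˣ := intUnit b

/-- A class modulo `n`-th powers contains a positive rational (for even `n` this says
that the class consists of positive rationals). -/
def IsPosClass (n : ℕ) (c : ℚˣ ⧸ powSubgroup n) : Prop :=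
  ∃ x : ℚˣ, QuotientGroup.mk x = c ∧ 0 < (x : ℚ)

/-- `δ(γ)` for a class `γ` modulo `(ℚˣ)ⁿ` (`n = 2^α`): if `γ = ±γ₀^(n/2)·(ℚˣ)ⁿ` with
`γ₀ > 1` squarefree, this is the discriminant of `ℚ(√γ₀)`, namely `γ₀` if `γ₀ ≡ 1 mod 4`
and `4γ₀` otherwise; the trivial class gets the value `1`. -/
def deltaClass (n : ℕ) (c : ℚˣ ⧸ powSubgroup n) : ℕ :=
  if c = 1 then 1
  else if h : ∃ g : ℕ, Squarefree g ∧ 1 < g ∧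
      ((QuotientGroup.mk (natUnit g ^ (n / 2)) : ℚˣ ⧸ powSubgroup n) = c ∨
       (QuotientGroup.mk (-(natUnit g ^ (n / 2))) : ℚˣ ⧸ powSubgroup n) = c)
  then (if h.choose % 4 = 1 then h.choose else 4 * h.choose)
  else 1

/-- The set `tildeΓ(m) ⊆ Γ(m₂)[2]`, where `m₂ = 2^(v₂(m))`. -/
def tildeGamma (Γ : Subgroup ℚˣ) (m : ℕ) :
    Set (ℚˣ ⧸ powSubgroup (2 ^ padicValNat 2 m)) :=
  {c | c ∈ GammaMod Γ (2 ^ padicValNat 2 m) ∧ c ^ 2 = 1 ∧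
    (if IsPosClass (2 ^ padicValNat 2 m) c
     then padicValNat 2 (deltaClass (2 ^ padicValNat 2 m) c) ≤ padicValNat 2 m
     else padicValNat 2 (deltaClass (2 ^ padicValNat 2 m) c) = padicValNat 2 m + 1)}

/-- `B_{Γ,k}`. -/
def BGamma (Γ : Subgroup ℚˣ) (k : ℕ) : ℝ :=
  ∑ᶠ c ∈ tildeGamma Γ k,
    ∏ᶠ ℓ ∈ {ℓ : ℕ | ℓ.Prime ∧ ℓ ∣ deltaClass (2 ^ padicValNat 2 k) c ∧ ¬ ℓ ∣ k},
      (-1 : ℝ) / (((ℓ : ℝ) - 1) * (Nat.card (GammaMod Γ ℓ)) - 1)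

/-- `A(Γ,m)`. -/
def AGamma (Γ : Subgroup ℚˣ) (m : ℕ) : ℝ :=
  (1 / ((Nat.totient m : ℝ) * (Nat.card (GammaMod Γ m) : ℝ))) *
  (∏ᶠ ℓ ∈ {ℓ : ℕ | ℓ.Prime ∧ ℓ ≠ 2 ∧ ℓ ∣ m},
      (1 - (Nat.card (GammaMod Γ (ℓ ^ padicValNat ℓ m)) : ℝ) /
        ((ℓ : ℝ) * (Nat.card (GammaMod Γ (ℓ ^ (padicValNat ℓ m + 1))) : ℝ)))) *
  (∏' ℓ : {ℓ : ℕ // ℓ.Prime ∧ ℓ ≠ 2 ∧ ¬ ℓ ∣ m},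
      (1 - 1 / ((((ℓ : ℕ) : ℝ) - 1) * (Nat.card (GammaMod Γ ((ℓ : ℕ))) : ℝ))))

/-- The set `{ζ_d} ∪ Γ^{1/d}` inside `ℂ`, where `Γ^{1/d}` is the set of real `d`-th
roots of elements of `Γ`. -/
def kummerSet (Γ : Subgroup ℚˣ) (d : ℕ) : Set ℂ :=
  {Complex.exp (2 * Real.pi * Complex.I / d)} ∪
  {z : ℂ | ∃ x : ℝ, (x : ℂ) = z ∧ ∃ γ ∈ Γ, x ^ d = ((γ : ℚ) : ℝ)}

/-- The degree `[ℚ(ζ_d, Γ^{1/d}) : ℚ]`. -/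
def kummerDegree (Γ : Subgroup ℚˣ) (d : ℕ) : ℕ :=
  Module.finrank ℚ (IntermediateField.adjoin ℚ (kummerSet Γ d))

/-- `ρ(Γ,m) = ∑_{k ≥ 1} μ(k)/[ℚ(ζ_{mk},Γ^{1/mk}):ℚ]`. -/
def rhoGamma (Γ : Subgroup ℚˣ) (m : ℕ) : ℝ :=
  ∑' k : ℕ, if k = 0 then 0 else
    (ArithmeticFunction.moebius k : ℝ) / (kummerDegree Γ (m * k) : ℝ)

/-- `Γ` has rank `r ≥ 1`: it contains an element of infinite order. -/
def HasPositiveRank (Γ : Subgroup ℚˣ) : Prop :=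
  ∃ g ∈ Γ, ∀ n : ℕ, 0 < n → g ^ n ≠ 1

/-- The discriminant of the quadratic field `ℚ(√g)`: writing `g = d·t²` with `d` a
squarefree integer, it is `d` if `d ≡ 1 mod 4` and `4d` otherwise (in particular it is
`1` if `g` is a square of a rational; junk value `0` at `g = 0`). -/
def quadDisc (g : ℚ) : ℤ :=
  if h : ∃ d : ℤ, Squarefree d ∧ ∃ t : ℚ, g = (d : ℚ) * t ^ 2
  then (if h.choose % 4 = 1 then h.choose else 4 * h.choose)
  else 0

/-- The support of `Γ`: primes occurring with nonzero valuation in some element of `Γ`. -/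
def suppGamma (Γ : Subgroup ℚˣ) : Set ℕ :=
  {ℓ : ℕ | ℓ.Prime ∧ ∃ γ ∈ Γ, padicValRat ℓ (γ : ℚ) ≠ 0}

/-- The reduction `Γ_p` of `Γ` modulo a prime `p` (not in the support of `Γ`),
as a subgroup of `(ZMod p)ˣ = 𝔽_pˣ`. -/
def reductionGamma (Γ : Subgroup ℚˣ) (p : ℕ) : Subgroup (ZMod p)ˣ :=
  Subgroup.closure
    {x : (ZMod p)ˣ | ∃ γ ∈ Γ,
      (x : ZMod p) = ((γ : ℚ).num : ZMod p) * (((γ : ℚ).den : ZMod p))⁻¹}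

/-- The `m`-th cyclotomic field `K_m = ℚ(ζ_m)` inside `ℂ`. -/
def cycloField (m : ℕ) : IntermediateField ℚ ℂ :=
  IntermediateField.adjoin ℚ {Complex.exp (2 * Real.pi * Complex.I / m)}

/-- `tildeΓ_{m,d} = (Γ·(ℚ*)^d ∩ (K_m^*)^d)/(ℚ*)^d`, as a subset of `ℚˣ/(ℚˣ)^d`. -/
def tildeGammaMD (Γ : Subgroup ℚˣ) (m d : ℕ) : Set (ℚˣ ⧸ powSubgroup d) :=
  {c | ∃ x : ℚˣ, QuotientGroup.mk x = c ∧ (∃ γ ∈ Γ, ∃ y : ℚˣ, x = γ * y ^ d) ∧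
    ∃ z ∈ cycloField m, z ^ d = ((x : ℚ) : ℂ)}

/-- The Artin constant `A = ∏_ℓ (1 - 1/(ℓ² - ℓ))`. -/
def artinConst : ℝ :=
  ∏' ℓ : {ℓ : ℕ // ℓ.Prime}, (1 - 1 / (((ℓ : ℕ) : ℝ) ^ 2 - ((ℓ : ℕ) : ℝ)))

/-- The subgroup `⟨-1, a⟩` of `ℚˣ` generated by `-1` and a rational `a`. -/
def negOneAGroup (a : ℚ) : Subgroup ℚˣ :=
  Subgroup.closure {u : ℚˣ | (u : ℚ) = -1 ∨ (u : ℚ) = a}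

/-- `τ_{a,m}` (depending only on `h`, `m` and `a₁`). -/
def tau (h m a₁ : ℕ) : ℝ :=
  if padicValNat 2 m < padicValNat 2 h then 0
  else if padicValNat 2 h = padicValNat 2 m ∧ padicValNat 2 m = 0 ∧ 2 ∣ h * a₁ then 0
  else if (padicValNat 2 h = 0 ∧ padicValNat 2 m = 0 ∧ ¬ 2 ∣ h * a₁) ∨
      (padicValNat 2 h = padicValNat 2 m ∧ 0 < padicValNat 2 m) ∨
      (padicValNat 2 h < padicValNat 2 m ∧ padicValNat 2 m = 1 ∧ 2 ∣ h * a₁) then -1/3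
  else 1

end

/-! For even `n`, a class `c` of `ℚˣ/(ℚˣ)ⁿ` with `c² = 1` is represented by `±g^(n/2)` with `g` a
squarefree natural number, and `g` is determined by `c`: taking absolute values reduces this to the
uniqueness of the squarefree part of a positive rational. Hence `δ(c)` is the discriminant `g` or
`4g` of `ℚ(√g)`, whose `2`-adic valuation is `0`, `2` or `3` according as `g ≡ 1, 3` or `2 mod 4`,
and comparing it with `v₂(m)` gives each case; for odd `m` the quotient is trivial. -/

lemma intUnit_coe {b : ℤ} (hb : b ≠ 0) : ((intUnit b : ℚˣ) : ℚ) = b := by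
  rw [intUnit, dif_neg (by exact_mod_cast hb)]
  rfl

lemma natUnit_coe {g : ℕ} (hg : g ≠ 0) : ((natUnit g : ℚˣ) : ℚ) = g := by
  rw [natUnit, intUnit_coe (by exact_mod_cast hg)]
  norm_cast

lemma natUnit_pos (g : ℕ) : 0 < ((natUnit g : ℚˣ) : ℚ) := by
  rcases eq_or_ne g 0 with rfl | hg
  · simp [natUnit, intUnit]
  · rw [natUnit_coe hg]
    exact Nat.cast_pos.mpr (Nat.pos_of_ne_zero hg)

lemma eq_of_squarefree_of_mul_eq_sq {a b s : ℕ} (ha : Squarefree a) (hb : Squarefree b)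
    (h : a * b = s ^ 2) : a = b := by
  refine Nat.eq_of_factorization_eq ha.ne_zero hb.ne_zero fun p => ?_
  have hp := congrArg (fun k => k.factorization p) h
  simp only [Nat.factorization_mul ha.ne_zero hb.ne_zero, Nat.factorization_pow,
    Finsupp.add_apply, Finsupp.smul_apply, smul_eq_mul] at hp
  have := ha.natFactorization_le_one p
  have := hb.natFactorization_le_one p
  omega

lemma eq_of_squarefree_of_cast_eq_mul_sq {a b : ℕ} (ha : Squarefree a) (hb : Squarefree b)
    {t : ℚ} (h : (a : ℚ) = b * t ^ 2) : a = b := by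
  have hsq : IsSquare ((a * b : ℕ) : ℚ) := ⟨b * t, by push_cast; rw [h]; ring⟩
  obtain ⟨s, hs⟩ := Rat.isSquare_natCast_iff.mp hsq
  exact eq_of_squarefree_of_mul_eq_sq ha hb (by rw [hs, sq])

lemma exists_squarefree_abs_eq_mul_sq {q : ℚ} (hq : q ≠ 0) :
    ∃ g : ℕ, Squarefree g ∧ ∃ t : ℚ, t ≠ 0 ∧ |q| = g * t ^ 2 := by
  obtain ⟨g, s, hgs, hg⟩ := Nat.sq_mul_squarefree (q.num.natAbs * q.den)
  have hden : (q.den : ℚ) ≠ 0 := by exact_mod_cast q.den_nz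
  have hs : s ≠ 0 := by
    rintro rfl
    simp [Rat.num_ne_zero.mpr hq, q.den_nz] at hgs
  refine ⟨g, hg, s / q.den, div_ne_zero (by exact_mod_cast hs) hden, ?_⟩
  have habs : |q| = (q.num.natAbs * q.den : ℕ) / (q.den : ℚ) ^ 2 := by
    rw [← Rat.num_div_den q, abs_div, Nat.abs_cast, Rat.num_div_den, Nat.cast_mul,
      Nat.cast_natAbs, Int.cast_abs]
    field_simp
  rw [habs, ← hgs]
  push_cast
  ring

/-- The discriminant of `ℚ(√g)` for squarefree `g`, the value taken by `deltaClass`. -/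
def sqfreeDisc (g : ℕ) : ℕ := if g % 4 = 1 then g else 4 * g

lemma padicValNat_two_sqfreeDisc {g : ℕ} (hg : Squarefree g) :
    padicValNat 2 (sqfreeDisc g) = if g % 4 = 1 then 0 else if g % 4 = 3 then 2 else 3 := by
  have h4 : ¬ 2 * 2 ∣ g := fun h => absurd (hg 2 h) (by decide)
  unfold sqfreeDisc
  split_ifs with h1 h3
  · exact padicValNat.eq_zero_of_not_dvd (show ¬ 2 ∣ g by omega)
  · rw [padicValNat.mul (by norm_num) hg.ne_zero,
      padicValNat.eq_zero_of_not_dvd (show ¬ 2 ∣ g by omega), show 4 = 2 ^ 2 by rfl,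
      padicValNat.prime_pow]
  · obtain ⟨j, rfl⟩ : 2 ∣ g := by omega
    rw [show 4 * (2 * j) = 2 ^ 3 * j by ring, padicValNat.mul (by norm_num) (by omega),
      padicValNat.prime_pow, padicValNat.eq_zero_of_not_dvd (show ¬ 2 ∣ j by omega)]

lemma padicValNat_two_sqfreeDisc_le {g : ℕ} (hg : Squarefree g) :
    padicValNat 2 (sqfreeDisc g) ≤ 3 := by
  rw [padicValNat_two_sqfreeDisc hg]
  split_ifs <;> omega

lemma abs_natUnit_pow {g : ℕ} (hg : g ≠ 0) (k : ℕ) :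
    |((natUnit g ^ k : ℚˣ) : ℚ)| = (g : ℚ) ^ k := by
  simp [Units.val_pow_eq_pow_val, natUnit_coe hg]

lemma abs_neg_natUnit_pow {g : ℕ} (hg : g ≠ 0) (k : ℕ) :
    |((-(natUnit g ^ k) : ℚˣ) : ℚ)| = (g : ℚ) ^ k := by
  rw [Units.val_neg, abs_neg, abs_natUnit_pow hg]

section PowerClasses

variable {n : ℕ}

lemma mk_eq_mk_iff_exists_pow {x y : ℚˣ} :
    (QuotientGroup.mk x : ℚˣ ⧸ powSubgroup n) = QuotientGroup.mk y ↔
      ∃ u : ℚˣ, y = x * u ^ n := by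
  rw [QuotientGroup.eq]
  exact ⟨fun ⟨u, hu⟩ => ⟨u, by rw [powMonoidHom_apply] at hu; rw [hu]; group⟩,
    fun ⟨u, hu⟩ => ⟨u, by rw [powMonoidHom_apply, hu]; group⟩⟩

lemma isPosClass_mk_iff (hn : Even n) {x : ℚˣ} :
    IsPosClass n (QuotientGroup.mk x) ↔ 0 < (x : ℚ) := by
  refine ⟨fun ⟨y, hy, hpos⟩ => ?_, fun h => ⟨x, rfl, h⟩⟩
  obtain ⟨u, rfl⟩ := mk_eq_mk_iff_exists_pow.mp hy
  rw [Units.val_mul, Units.val_pow_eq_pow_val]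
  exact mul_pos hpos (hn.pow_pos u.ne_zero)

lemma sq_mk_eq_one_of_abs_eq (hn : Even n) {g : ℕ} (hg : g ≠ 0) {y : ℚˣ}
    (hy : |(y : ℚ)| = (g : ℚ) ^ (n / 2)) :
    (QuotientGroup.mk y : ℚˣ ⧸ powSubgroup n) ^ 2 = 1 := by
  obtain ⟨k, rfl⟩ := hn
  rw [← QuotientGroup.mk_pow, QuotientGroup.eq_one_iff]
  refine ⟨natUnit g, Units.ext ?_⟩
  rw [powMonoidHom_apply, Units.val_pow_eq_pow_val, Units.val_pow_eq_pow_val, natUnit_coe hg,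
    ← sq_abs, hy, show (k + k) / 2 = k by omega, ← pow_mul, mul_two]

lemma exists_abs_eq_of_sq_eq_one (hn : Even n) {c : ℚˣ ⧸ powSubgroup n} (hc : c ^ 2 = 1) :
    ∃ g : ℕ, Squarefree g ∧
      ∃ y : ℚˣ, QuotientGroup.mk y = c ∧ |(y : ℚ)| = (g : ℚ) ^ (n / 2) := by
  induction c using QuotientGroup.induction_on with | H x => ?_
  obtain ⟨k, rfl⟩ := hn
  rw [← QuotientGroup.mk_pow, QuotientGroup.eq_one_iff] at hc
  obtain ⟨w, hw⟩ := hc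
  obtain ⟨g, hg, t, ht, hwt⟩ := exists_squarefree_abs_eq_mul_sq w.ne_zero
  have hx : |(x : ℚ)| = g ^ k * (t ^ 2) ^ k := by
    have hw' : (w : ℚ) ^ (k + k) = (x : ℚ) ^ 2 := by
      rw [← Units.val_pow_eq_pow_val, ← Units.val_pow_eq_pow_val, ← powMonoidHom_apply, hw]
    have hsq : |(x : ℚ)| ^ 2 = (|(w : ℚ)| ^ k) ^ 2 := by
      rw [sq_abs, ← hw', ← pow_mul, mul_comm, pow_mul, sq_abs, ← pow_mul, two_mul]
    rw [pow_left_inj₀ (abs_nonneg _) (by positivity) two_ne_zero] at hsq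
    rw [hsq, hwt, mul_pow]
  refine ⟨g, hg, x * (Units.mk0 t ht)⁻¹ ^ (k + k),
    mk_eq_mk_iff_exists_pow.mpr ⟨Units.mk0 t ht, by group⟩, ?_⟩
  rw [Units.val_mul, Units.val_pow_eq_pow_val, Units.val_inv_eq_inv_val, Units.val_mk0, abs_mul,
    hx, show (k + k) / 2 = k by omega, ← two_mul, pow_mul, abs_pow, abs_sq, mul_assoc, ← mul_pow,
    inv_pow, mul_inv_cancel₀ (pow_ne_zero 2 ht), one_pow, mul_one]

lemma eq_of_mk_eq_mk_of_abs_eq (hn : Even n) (hn0 : n ≠ 0) {g g' : ℕ} (hg : Squarefree g)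
    (hg' : Squarefree g') {y y' : ℚˣ} (hy : |(y : ℚ)| = (g : ℚ) ^ (n / 2))
    (hy' : |(y' : ℚ)| = (g' : ℚ) ^ (n / 2))
    (h : (QuotientGroup.mk y : ℚˣ ⧸ powSubgroup n) = QuotientGroup.mk y') : g = g' := by
  obtain ⟨k, rfl⟩ := hn
  obtain ⟨u, rfl⟩ := mk_eq_mk_iff_exists_pow.mp h
  rw [show (k + k) / 2 = k by omega] at hy hy'
  have hpow : (g' : ℚ) ^ k = (g * (u : ℚ) ^ 2) ^ k := by
    rw [← hy', Units.val_mul, Units.val_pow_eq_pow_val, abs_mul, hy, ← two_mul, pow_mul, abs_pow,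
      abs_sq, mul_pow]
  rw [pow_left_inj₀ (by positivity) (by positivity) (by omega)] at hpow
  exact (eq_of_squarefree_of_cast_eq_mul_sq hg' hg hpow).symm

lemma deltaClass_mk_of_abs_eq (hn : Even n) (hn0 : n ≠ 0) {g : ℕ} (hg : Squarefree g) {y : ℚˣ}
    (hy : |(y : ℚ)| = (g : ℚ) ^ (n / 2)) :
    deltaClass n (QuotientGroup.mk y) = sqfreeDisc g := by
  by_cases hc : (QuotientGroup.mk y : ℚˣ ⧸ powSubgroup n) = 1
  · have h1 : |((1 : ℚˣ) : ℚ)| = ((1 : ℕ) : ℚ) ^ (n / 2) := by simp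
    obtain rfl := eq_of_mk_eq_mk_of_abs_eq hn hn0 hg squarefree_one hy h1 hc
    rw [deltaClass, if_pos hc]
    rfl
  rw [deltaClass, if_neg hc]
  split
  next hrep =>
    obtain ⟨hg', -, hrep'⟩ := hrep.choose_spec
    have hchoose : hrep.choose = g := by
      rcases hrep' with h | h
      · exact eq_of_mk_eq_mk_of_abs_eq hn hn0 hg' hg (abs_natUnit_pow hg'.ne_zero _) hy h
      · exact eq_of_mk_eq_mk_of_abs_eq hn hn0 hg' hg (abs_neg_natUnit_pow hg'.ne_zero _) hy h
    exact congrArg sqfreeDisc hchoose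
  next hrep =>
    obtain rfl : g = 1 := by
      by_contra hg1
      refine hrep ⟨g, hg, by have := hg.ne_zero; omega, ?_⟩
      rw [← abs_natUnit_pow hg.ne_zero, abs_eq_abs] at hy
      rcases hy with h | h
      · exact Or.inl (congrArg _ (Units.ext h).symm)
      · exact Or.inr (congrArg _ (Units.ext (by rw [h, Units.val_neg])).symm)
    rfl

lemma padicValNat_two_deltaClass_le (c : ℚˣ ⧸ powSubgroup n) :
    padicValNat 2 (deltaClass n c) ≤ 3 := by
  rw [deltaClass]
  split
  · simp
  split
  next hrep => exact padicValNat_two_sqfreeDisc_le hrep.choose_spec.1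
  next => simp

end PowerClasses

section TildeGamma

variable (Γ : Subgroup ℚˣ) {m : ℕ}

lemma one_mem_tildeGamma : (1 : ℚˣ ⧸ powSubgroup (2 ^ padicValNat 2 m)) ∈ tildeGamma Γ m := by
  have hpos : IsPosClass (2 ^ padicValNat 2 m) 1 := ⟨1, rfl, one_pos⟩
  refine ⟨(GammaMod Γ _).one_mem, one_pow 2, ?_⟩
  rw [if_pos hpos, deltaClass, if_pos rfl, padicValNat_one_right]
  exact Nat.zero_le _

lemma tildeGamma_of_padicValNat_eq_zero (hm : padicValNat 2 m = 0) : tildeGamma Γ m = {1} := by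
  refine Set.eq_singleton_iff_unique_mem.mpr ⟨one_mem_tildeGamma Γ, fun c _ => ?_⟩
  induction c using QuotientGroup.induction_on with
  | H x =>
    exact (QuotientGroup.eq_one_iff x).mpr ⟨x, by rw [hm, powMonoidHom_apply, pow_zero, pow_one]⟩

lemma mem_tildeGamma_mk_iff (hm : padicValNat 2 m ≠ 0) {g : ℕ} (hg : Squarefree g) {y : ℚˣ}
    (hy : |(y : ℚ)| = (g : ℚ) ^ (2 ^ padicValNat 2 m / 2)) :
    (QuotientGroup.mk y : ℚˣ ⧸ powSubgroup (2 ^ padicValNat 2 m)) ∈ tildeGamma Γ m ↔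
      QuotientGroup.mk y ∈ GammaMod Γ (2 ^ padicValNat 2 m) ∧
        if 0 < (y : ℚ) then padicValNat 2 (sqfreeDisc g) ≤ padicValNat 2 m
        else padicValNat 2 (sqfreeDisc g) = padicValNat 2 m + 1 := by
  have hn : Even (2 ^ padicValNat 2 m) := Nat.even_pow.mpr ⟨even_two, hm⟩
  have hn0 : 2 ^ padicValNat 2 m ≠ 0 := by positivity
  simp only [tildeGamma, Set.mem_ofPred_eq, sq_mk_eq_one_of_abs_eq hn hg.ne_zero hy, true_and,
    isPosClass_mk_iff hn, deltaClass_mk_of_abs_eq hn hn0 hg hy]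

lemma exists_abs_eq_of_mem_tildeGamma (hm : padicValNat 2 m ≠ 0)
    {c : ℚˣ ⧸ powSubgroup (2 ^ padicValNat 2 m)} (hc : c ∈ tildeGamma Γ m) :
    ∃ g : ℕ, Squarefree g ∧ ∃ y : ℚˣ, QuotientGroup.mk y = c ∧
      |(y : ℚ)| = (g : ℚ) ^ (2 ^ padicValNat 2 m / 2) :=
  exists_abs_eq_of_sq_eq_one (Nat.even_pow.mpr ⟨even_two, hm⟩) hc.2.1

lemma tildeGamma_of_padicValNat_eq_one (hm : padicValNat 2 m = 1) :
    tildeGamma Γ m = {c | c ∈ GammaMod Γ (2 ^ padicValNat 2 m) ∧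
        ∃ b : ℤ, Squarefree b ∧
          (QuotientGroup.mk (intUnit b) : ℚˣ ⧸ powSubgroup (2 ^ padicValNat 2 m)) = c ∧
          b % 4 = 1} := by
  have hm0 : padicValNat 2 m ≠ 0 := by omega
  ext c
  constructor
  · intro hc
    obtain ⟨g, hg, y, rfl, hy⟩ := exists_abs_eq_of_mem_tildeGamma Γ hm0 hc
    obtain ⟨hΓ, hcond⟩ := (mem_tildeGamma_mk_iff Γ hm0 hg hy).mp hc
    have hδ := padicValNat_two_sqfreeDisc hg
    rw [hm, pow_one, Nat.div_self two_pos, pow_one, abs_eq (Nat.cast_nonneg g)] at hy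
    have hg0 : (0 : ℚ) < g := Nat.cast_pos.mpr (Nat.pos_of_ne_zero hg.ne_zero)
    rcases hy with hy | hy
    · rw [if_pos (hy ▸ hg0)] at hcond
      refine ⟨hΓ, g, Int.squarefree_natCast.mpr hg, congrArg _ (Units.ext ?_),
        by split_ifs at hδ <;> omega⟩
      rw [intUnit_coe (by exact_mod_cast hg.ne_zero), hy, Int.cast_natCast]
    · rw [if_neg (by rw [hy]; linarith)] at hcond
      refine ⟨hΓ, -g, Int.squarefree_natAbs.mp (by simpa using hg), congrArg _ (Units.ext ?_),
        by split_ifs at hδ <;> omega⟩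
      rw [intUnit_coe (by simpa using hg.ne_zero), hy, Int.cast_neg, Int.cast_natCast]
  · rintro ⟨hΓ, b, hb, rfl, hb4⟩
    have hb0 : b ≠ 0 := hb.ne_zero
    have hy : |((intUnit b : ℚˣ) : ℚ)| = ((b.natAbs : ℕ) : ℚ) ^ (2 ^ padicValNat 2 m / 2) := by
      rw [intUnit_coe hb0, hm, Nat.cast_natAbs, Int.cast_abs]
      norm_num
    have hg : Squarefree b.natAbs := Int.squarefree_natAbs.mpr hb
    refine (mem_tildeGamma_mk_iff Γ hm0 hg hy).mpr ⟨hΓ, ?_⟩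
    have hδ := padicValNat_two_sqfreeDisc hg
    simp only [intUnit_coe hb0, hm, Int.cast_pos]
    split_ifs at hδ ⊢ <;> omega

lemma tildeGamma_of_padicValNat_eq_two (hm : padicValNat 2 m = 2) :
    tildeGamma Γ m = {c | c ∈ GammaMod Γ (2 ^ padicValNat 2 m) ∧
        ∃ g : ℕ, Squarefree g ∧ 0 < g ∧
          ((¬ 2 ∣ g ∧
            (QuotientGroup.mk (natUnit g ^ 2) : ℚˣ ⧸ powSubgroup (2 ^ padicValNat 2 m)) = c) ∨
           (2 ∣ g ∧
            (QuotientGroup.mk (-(natUnit g ^ 2)) : ℚˣ ⧸ powSubgroup (2 ^ padicValNat 2 m)) = c))} := by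
  have hm0 : padicValNat 2 m ≠ 0 := by omega
  have hhalf : 2 ^ padicValNat 2 m / 2 = 2 := by rw [hm]; rfl
  have hpos : ∀ g : ℕ, 0 < ((natUnit g ^ 2 : ℚˣ) : ℚ) := fun g => by
    rw [Units.val_pow_eq_pow_val]
    exact pow_pos (natUnit_pos g) 2
  ext c
  constructor
  · intro hc
    obtain ⟨g, hg, y, rfl, hy⟩ := exists_abs_eq_of_mem_tildeGamma Γ hm0 hc
    obtain ⟨hΓ, hcond⟩ := (mem_tildeGamma_mk_iff Γ hm0 hg hy).mp hc
    have hδ := padicValNat_two_sqfreeDisc hg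
    rw [hhalf, ← abs_natUnit_pow hg.ne_zero, abs_eq_abs] at hy
    refine ⟨hΓ, g, hg, Nat.pos_of_ne_zero hg.ne_zero, ?_⟩
    rcases hy with hy | hy
    · rw [if_pos (hy ▸ hpos g), hm] at hcond
      exact Or.inl ⟨by split_ifs at hδ <;> omega, congrArg _ (Units.ext hy).symm⟩
    · rw [if_neg (by rw [hy]; linarith [hpos g]), hm] at hcond
      exact Or.inr ⟨by split_ifs at hδ <;> omega,
        congrArg _ (Units.ext (by rw [hy, Units.val_neg])).symm⟩
  · rintro ⟨hΓ, g, hg, -, ⟨hodd, rfl⟩ | ⟨heven, rfl⟩⟩ <;>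
      have hδ := padicValNat_two_sqfreeDisc hg
    · have habs : |((natUnit g ^ 2 : ℚˣ) : ℚ)| = (g : ℚ) ^ (2 ^ padicValNat 2 m / 2) := by
        rw [hhalf, abs_natUnit_pow hg.ne_zero]
      refine (mem_tildeGamma_mk_iff Γ hm0 hg habs).mpr ⟨hΓ, ?_⟩
      rw [if_pos (hpos g), hm]
      split_ifs at hδ <;> omega
    · have habs : |((-(natUnit g ^ 2) : ℚˣ) : ℚ)| = (g : ℚ) ^ (2 ^ padicValNat 2 m / 2) := by
        rw [hhalf, abs_neg_natUnit_pow hg.ne_zero]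
      refine (mem_tildeGamma_mk_iff Γ hm0 hg habs).mpr ⟨hΓ, ?_⟩
      rw [if_neg (by rw [Units.val_neg]; linarith [hpos g]), hm]
      split_ifs at hδ <;> omega

lemma tildeGamma_of_three_le_padicValNat (hm : 3 ≤ padicValNat 2 m) :
    tildeGamma Γ m = {c | c ∈ GammaMod Γ (2 ^ padicValNat 2 m) ∧ c ^ 2 = 1 ∧
        IsPosClass (2 ^ padicValNat 2 m) c} := by
  ext c
  have hle : padicValNat 2 (deltaClass _ c) ≤ padicValNat 2 m :=
    (padicValNat_two_deltaClass_le c).trans (by omega)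
  have hne : padicValNat 2 (deltaClass _ c) ≠ padicValNat 2 m + 1 := by omega
  simp only [tildeGamma, Set.mem_ofPred_eq]
  split_ifs with hpos <;> simp [hpos, hle, hne]

end TildeGamma

theorem tildeGamma_description_general (Γ : Subgroup ℚˣ) (m : ℕ) :
    (¬ 2 ∣ m → tildeGamma Γ m = {1}) ∧
    (padicValNat 2 m = 1 →
      tildeGamma Γ m = {c | c ∈ GammaMod Γ (2 ^ padicValNat 2 m) ∧
        ∃ b : ℤ, Squarefree b ∧
          (QuotientGroup.mk (intUnit b) : ℚˣ ⧸ powSubgroup (2 ^ padicValNat 2 m)) = c ∧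
          b % 4 = 1}) ∧
    (padicValNat 2 m = 2 →
      tildeGamma Γ m = {c | c ∈ GammaMod Γ (2 ^ padicValNat 2 m) ∧
        ∃ g : ℕ, Squarefree g ∧ 0 < g ∧
          ((¬ 2 ∣ g ∧
            (QuotientGroup.mk (natUnit g ^ 2) : ℚˣ ⧸ powSubgroup (2 ^ padicValNat 2 m)) = c) ∨
           (2 ∣ g ∧
            (QuotientGroup.mk (-(natUnit g ^ 2)) : ℚˣ ⧸ powSubgroup (2 ^ padicValNat 2 m)) = c))}) ∧
    (3 ≤ padicValNat 2 m →
      tildeGamma Γ m = {c | c ∈ GammaMod Γ (2 ^ padicValNat 2 m) ∧ c ^ 2 = 1 ∧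
        IsPosClass (2 ^ padicValNat 2 m) c}) :=
  ⟨fun h => tildeGamma_of_padicValNat_eq_zero Γ (padicValNat.eq_zero_of_not_dvd h),
    tildeGamma_of_padicValNat_eq_one Γ, tildeGamma_of_padicValNat_eq_two Γ,
    tildeGamma_of_three_le_padicValNat Γ⟩

/-- **Explicit description of `tildeΓ(m)`** according to `v₂(m)`. -/
theorem tildeGamma_description (Γ : Subgroup ℚˣ) (hFG : Γ.FG) (m : ℕ) (hm : 1 ≤ m) :
    (¬ 2 ∣ m → tildeGamma Γ m = {1}) ∧
    (padicValNat 2 m = 1 →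
      tildeGamma Γ m = {c | c ∈ GammaMod Γ (2 ^ padicValNat 2 m) ∧
        ∃ b : ℤ, Squarefree b ∧
          (QuotientGroup.mk (intUnit b) : ℚˣ ⧸ powSubgroup (2 ^ padicValNat 2 m)) = c ∧
          b % 4 = 1}) ∧
    (padicValNat 2 m = 2 →
      tildeGamma Γ m = {c | c ∈ GammaMod Γ (2 ^ padicValNat 2 m) ∧
        ∃ g : ℕ, Squarefree g ∧ 0 < g ∧
          ((¬ 2 ∣ g ∧
            (QuotientGroup.mk (natUnit g ^ 2) : ℚˣ ⧸ powSubgroup (2 ^ padicValNat 2 m)) = c) ∨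
           (2 ∣ g ∧
            (QuotientGroup.mk (-(natUnit g ^ 2)) : ℚˣ ⧸ powSubgroup (2 ^ padicValNat 2 m)) = c))}) ∧
    (3 ≤ padicValNat 2 m →
      tildeGamma Γ m = {c | c ∈ GammaMod Γ (2 ^ padicValNat 2 m) ∧ c ^ 2 = 1 ∧
        IsPosClass (2 ^ padicValNat 2 m) c}) :=
  tildeGamma_description_general Γ m
end

section
/- Let Γ ⊂ ℚ* be a finitely generated subgroup and let m be an even positive integer. Then tildeΓ_{m,2} = {γ ∈ Γ(2) : disc(ℚ(√γ')) ∣ m}. -/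
/- Common definitions: finitely generated multiplicative subgroups `Γ ⊆ ℚˣ`,
the quotients `Γ(n) = Γ·(ℚ*)ⁿ/(ℚ*)ⁿ`, the invariants `δ(γ)`, the group `tildeΓ(m)`,
the constants `A(Γ,m)` and `B_{Γ,k}`, and the density `ρ(Γ,m)`. -/

open scoped Classical

/-!
Every class of `ℚˣ / (ℚˣ)²` is represented by a squarefree integer `b`, and the class lies in
`tildeΓ_{m,2}` exactly when `√b ∈ ℚ(ζ_m)`. So the theorem reduces to: for squarefree `b`,
`√b ∈ ℚ(ζ_m)` if and only if `disc ℚ(√b) ∣ m`.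

If the discriminant divides `m`, then `√b` is a product of the quadratic Gauss sums
`√p* ∈ ℚ(ζ_p)` (`p* = ±p ≡ 1 mod 4`), of `√-1 = ζ₄` and of `√2 = ζ₈ + ζ₈⁻¹`. Conversely,
if an odd prime `p ∣ b` does not divide `m`, or `4 ∤ m` while `b ≡ 3 mod 4`, or `8 ∤ m`
while `b` is even, the Chinese remainder theorem gives `t ≡ 1 mod m` whose automorphism
`ζ ↦ ζᵗ` of a larger cyclotomic field fixes `ℚ(ζ_m)` but negates `√p*` (`t` a non-residue
mod `p`), `ζ₄` (`t ≡ 3 mod 4`) or `ζ₈ ± ζ₈⁻¹` (`t ≡ 5 mod 8`). Dividing `√b` by the square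
roots that are available reduces it to that one, which therefore is not in `ℚ(ζ_m)`.
-/

namespace CyclotomicSqrt

open IntermediateField

def oddStar (c : ℤ) : ℤ := if c % 4 = 1 then c else -c

lemma oddStar_eq_or_eq_neg (c : ℤ) : oddStar c = c ∨ oddStar c = -c := by
  unfold oddStar; split_ifs <;> simp

lemma natAbs_oddStar (c : ℤ) : (oddStar c).natAbs = c.natAbs := by
  rcases oddStar_eq_or_eq_neg c with h | h <;> simp [h]

lemma oddStar_modEq_one {c : ℤ} (hc : Odd c) : oddStar c ≡ 1 [ZMOD 4] := by
  obtain ⟨k, rfl⟩ := hc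
  unfold oddStar Int.ModEq; split_ifs <;> omega

lemma eq_oddStar {a c : ℤ} (hc : Odd c) (h : a.natAbs = c.natAbs) (ha : a ≡ 1 [ZMOD 4]) :
    a = oddStar c := by
  obtain ⟨k, rfl⟩ := hc
  unfold oddStar Int.ModEq at *
  rcases Int.natAbs_eq_natAbs_iff.mp h with rfl | rfl <;> split_ifs <;> omega

lemma oddStar_eq_prod {c : ℤ} (hc : Squarefree c) (hodd : Odd c) :
    oddStar c = ∏ p ∈ c.natAbs.primeFactors, oddStar p := by
  have hodd' : ∀ p ∈ c.natAbs.primeFactors, Odd (p : ℤ) := fun p hp =>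
    (Int.odd_coe_nat p).mpr <|
      (Int.natAbs_odd.mpr hodd).of_dvd_nat (Nat.dvd_of_mem_primeFactors hp)
  refine (eq_oddStar hodd ?_
    (Int.ModEq.prod_one fun p hp => oddStar_modEq_one (hodd' p hp))).symm
  rw [← Int.natAbsHom_apply, map_prod]
  simp only [Int.natAbsHom_apply, natAbs_oddStar, Int.natAbs_natCast]
  exact Nat.prod_primeFactors_of_squarefree (Int.squarefree_natAbs.mpr hc)

lemma odd_of_squarefree_two_mul {c : ℤ} (h : Squarefree (2 * c)) : Odd c := by
  by_contra hc
  obtain ⟨d, rfl⟩ := Int.not_odd_iff_even.mp hc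
  exact absurd (h 2 ⟨d, by ring⟩) (by decide)

lemma exists_squarefree_mul_sq (n : ℤ) : ∃ b s : ℤ, Squarefree b ∧ n = b * s ^ 2 := by
  rcases eq_or_ne n 0 with rfl | hn
  · exact ⟨1, 0, squarefree_one, by simp⟩
  obtain ⟨a, s, hs, ha⟩ := Nat.sq_mul_squarefree n.natAbs
  refine ⟨n.sign * a, s, ?_, ?_⟩
  · rwa [← Int.squarefree_natAbs, Int.natAbs_mul, Int.natAbs_sign_of_ne_zero hn, one_mul,
      Int.natAbs_natCast]
  · conv_lhs => rw [← Int.sign_mul_natAbs n, ← hs]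
    push_cast; ring

lemma isUnit_of_sq_dvd_mul_sq {s x y : ℤ} (hs : Squarefree s) (hxy : IsCoprime x y)
    (h : x ^ 2 ∣ s * y ^ 2) : IsUnit x :=
  hs x (by rw [← sq]; exact hxy.pow.dvd_of_dvd_mul_right h)

lemma eq_of_squarefree_of_eq_mul_sq {b d : ℤ} (hb : Squarefree b) (hd : Squarefree d) {t : ℚ}
    (h : (b : ℚ) = d * t ^ 2) : d = b := by
  have hcop : IsCoprime t.num t.den := Int.isCoprime_iff_gcd_eq_one.mpr t.reduced
  have key : b * (t.den : ℤ) ^ 2 = d * t.num ^ 2 := by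
    rw [← Rat.num_div_den t] at h
    field_simp at h
    exact_mod_cast h
  have hnum := isUnit_of_sq_dvd_mul_sq hb hcop (key ▸ dvd_mul_left _ _)
  have hden := isUnit_of_sq_dvd_mul_sq hd hcop.symm (key.symm ▸ dvd_mul_left _ _)
  rw [Int.isUnit_sq hnum, Int.isUnit_sq hden] at key
  simpa using key.symm

lemma quadDisc_intCast {b : ℤ} (hb : Squarefree b) :
    quadDisc b = if b % 4 = 1 then b else 4 * b := by
  have hex : ∃ d : ℤ, Squarefree d ∧ ∃ t : ℚ, (b : ℚ) = d * t ^ 2 := ⟨b, hb, 1, by simp⟩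
  obtain ⟨hd, t, ht⟩ := hex.choose_spec
  rw [quadDisc, dif_pos hex, eq_of_squarefree_of_eq_mul_sq hb hd ht]

lemma isSquare_mul_sq_iff {K : Type*} [Field K] {a s : K} (hs : s ≠ 0) :
    IsSquare (a * s ^ 2) ↔ IsSquare a :=
  ⟨fun h => by simpa [hs] using h.div (IsSquare.sq s), fun h => h.mul (IsSquare.sq s)⟩

lemma isSquare_of_isSquare_mul_sq {K : Type*} [Field K] [CharZero K] {r s : ℤ} (hs : s ≠ 0)
    (h : IsSquare ((r * s ^ 2 : ℤ) : K)) : IsSquare (r : K) :=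
  (isSquare_mul_sq_iff (Int.cast_ne_zero.mpr hs)).mp (by rwa [Int.cast_mul, Int.cast_pow] at h)

lemma isSquare_oddStar_iff {K : Type*} [CommRing K] (h : IsSquare ((-1 : ℤ) : K)) (c : ℤ) :
    IsSquare (oddStar c : K) ↔ IsSquare (c : K) := by
  rcases oddStar_eq_or_eq_neg c with hc | hc
  · rw [hc]
  · rw [hc]
    exact ⟨fun h' => by simpa using h.mul h', fun h' => by simpa using h.mul h'⟩

section RootsOfUnity

variable {F : Type*} [Field F] {ζ : F}

lemma _root_.IsPrimitiveRoot.pow_eq_neg_one {k : ℕ} (hk : k ≠ 0)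
    (hζ : IsPrimitiveRoot ζ (2 * k)) : ζ ^ k = -1 :=
  (hζ.pow (by omega) (mul_comm 2 k)).eq_neg_one_of_two_right

lemma sq_add_mul_inv {ε : ℤ} (hε : ε = 1 ∨ ε = -1) (hζ : ζ ^ 4 = -1) :
    (ζ + ε * ζ⁻¹) ^ 2 = 2 * ε := by
  have hζ0 : ζ ≠ 0 := by rintro rfl; norm_num at hζ
  field_simp
  rcases hε with rfl | rfl <;> push_cast <;> linear_combination hζ

lemma map_add_mul_inv {G : Type*} [FunLike G F F] [RingHomClass G F F] (σ : G) (ε : ℤ)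
    (hζ : ζ ^ 4 = -1) (hσ : σ ζ = ζ ^ 5) : σ (ζ + ε * ζ⁻¹) = -(ζ + ε * ζ⁻¹) := by
  rw [map_add, map_mul, map_inv₀, map_intCast, hσ,
    show ζ ^ 5 = -ζ by linear_combination ζ * hζ]
  ring

end RootsOfUnity

noncomputable def quadGaussSum (p : ℕ) [Fact p.Prime] {F : Type*} [Field F] {ζ : F}
    (hζ : ζ ^ p = 1) : F :=
  gaussSum ((quadraticChar (ZMod p)).ringHomComp (Int.castRingHom F)) (AddChar.zmodChar p hζ)

section GaussSum

variable {p : ℕ} [Fact p.Prime] {F : Type*} [Field F] [CharZero F] {ζ : F}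

lemma quadGaussSum_sq (hp : p ≠ 2) (hζ : IsPrimitiveRoot ζ p) :
    quadGaussSum p hζ.pow_eq_one ^ 2 = (oddStar p : F) := by
  have hF : ringChar (ZMod p) ≠ 2 := by rwa [ZMod.ringChar_zmod_n]
  rw [quadGaussSum, gaussSum_sq
    ((MulChar.ringHomComp_ne_one_iff Int.cast_injective).mpr (quadraticChar_ne_one hF))
    ((quadraticChar_isQuadratic (ZMod p)).comp _)
    (AddChar.zmodChar_primitive_of_primitive_root p hζ)]
  rw [MulChar.ringHomComp_apply, quadraticChar_neg_one hF, ZMod.card,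
    ZMod.χ₄_nat_eq_if_mod_four]
  have hp2 : p % 2 = 1 := Nat.odd_iff.mp ((Fact.out : p.Prime).odd_of_ne_two hp)
  have hp2' : ¬ p % 2 = 0 := by omega
  rcases (by omega : p % 4 = 1 ∨ p % 4 = 3) with h4 | h4
  · simp [oddStar, h4, hp2', show (p : ℤ) % 4 = 1 by omega]
  · simp [oddStar, h4, hp2', show ¬ (p : ℤ) % 4 = 1 by omega]

lemma map_quadGaussSum {G : Type*} [FunLike G F F] [RingHomClass G F F] (σ : G)
    (hζ : ζ ^ p = 1) {a : ℕ} (hσ : σ ζ = ζ ^ a) (ha : quadraticChar (ZMod p) a = -1) :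
    σ (quadGaussSum p hζ) = - quadGaussSum p hζ := by
  have hshift : σ (quadGaussSum p hζ) = gaussSum ((quadraticChar (ZMod p)).ringHomComp
      (Int.castRingHom F)) ((AddChar.zmodChar p hζ).mulShift a) := by
    simp only [quadGaussSum, gaussSum, map_sum, map_mul]
    refine Finset.sum_congr rfl fun x _ => congr_arg₂ _ (map_intCast σ _) ?_
    rw [AddChar.mulShift_apply, AddChar.zmodChar_apply, AddChar.zmodChar_apply, map_pow, hσ,
      ← pow_mul]
    refine pow_eq_pow_of_modEq ?_ hζ
    simp [Nat.ModEq, ZMod.val_mul, ZMod.val_natCast, Nat.mul_mod, mul_comm]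
  have hunit : IsUnit (a : ZMod p) :=
    Ne.isUnit fun h => by simp [h] at ha
  have := gaussSum_mulShift ((quadraticChar (ZMod p)).ringHomComp
      (Int.castRingHom F)) (AddChar.zmodChar p hζ) hunit.unit
  rw [IsUnit.unit_spec, MulChar.ringHomComp_apply, ha, ← hshift] at this
  change _ = -gaussSum _ _
  rw [← this]
  simp

end GaussSum

noncomputable def zeta (n : ℕ) : ℂ := Complex.exp (2 * Real.pi * Complex.I / n)

lemma isPrimitiveRoot_zeta {n : ℕ} (hn : n ≠ 0) : IsPrimitiveRoot (zeta n) n :=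
  Complex.isPrimitiveRoot_exp n hn

noncomputable def gen (n : ℕ) : cycloField n := AdjoinSimple.gen ℚ (zeta n)

lemma isPrimitiveRoot_gen {n : ℕ} (hn : n ≠ 0) : IsPrimitiveRoot (gen n) n :=
  IsPrimitiveRoot.coe_submonoidClass_iff.mp (isPrimitiveRoot_zeta hn)

instance isCyclotomicExtension_cycloField (n : ℕ) [NeZero n] :
    IsCyclotomicExtension {n} ℚ (cycloField n) := by
  have hζ := isPrimitiveRoot_zeta (NeZero.ne n)
  change IsCyclotomicExtension {n} ℚ ℚ⟮zeta n⟯.toSubalgebra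
  rw [adjoin_simple_toSubalgebra_of_isAlgebraic
    ((hζ.isIntegral (NeZero.pos n)).tower_top (A := ℚ)).isAlgebraic]
  exact hζ.adjoin_isCyclotomicExtension ℚ

lemma cycloField_mono {d n : ℕ} (hn : n ≠ 0) (h : d ∣ n) : cycloField d ≤ cycloField n := by
  rw [cycloField, adjoin_simple_le_iff]
  obtain ⟨k, rfl⟩ := h
  have hk : k ≠ 0 := right_ne_zero_of_mul hn
  have hd : d ≠ 0 := left_ne_zero_of_mul hn
  have : zeta d = zeta (d * k) ^ k := by
    rw [zeta, zeta, ← Complex.exp_nat_mul]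
    congr 1
    push_cast
    field_simp
  rw [← zeta, this]
  exact pow_mem (mem_adjoin_simple_self ℚ _) k

lemma isSquare_intCast_of_dvd {d n : ℕ} (hn : n ≠ 0) (h : d ∣ n) {r : ℤ}
    (hr : IsSquare (r : cycloField d)) : IsSquare (r : cycloField n) := by
  simpa using hr.map (inclusion (cycloField_mono hn h))

lemma isSquare_ratCast_iff {m : ℕ} {q : ℚ} :
    IsSquare (q : cycloField m) ↔ ∃ z ∈ cycloField m, z ^ 2 = (q : ℂ) := by
  constructor
  · rintro ⟨z, hz⟩
    exact ⟨z, z.2, by rw [sq, ← IntermediateField.coe_mul, ← hz]; simp⟩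
  · rintro ⟨z, hz, hz2⟩
    refine ⟨⟨z, hz⟩, Subtype.ext ?_⟩
    simp [← sq, hz2]

lemma exists_algEquiv_pow_of_coprime {N t : ℕ} (hN : N ≠ 0) (ht : t.Coprime N) :
    ∃ σ : cycloField N ≃ₐ[ℚ] cycloField N, ∀ x : cycloField N, x ^ N = 1 → σ x = x ^ t := by
  have : NeZero N := ⟨hN⟩
  have hζ := IsCyclotomicExtension.zeta_spec N ℚ (cycloField N)
  refine ⟨IsCyclotomicExtension.fromZetaAut (hζ.pow_of_coprime t ht)
    (Polynomial.cyclotomic.irreducible_rat (Nat.pos_of_ne_zero hN)), fun x hx => ?_⟩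
  obtain ⟨k, -, rfl⟩ := hζ.eq_pow_of_pow_eq_one hx
  rw [map_pow, IsCyclotomicExtension.fromZetaAut_spec, ← pow_mul, ← pow_mul, mul_comm]

lemma exists_algEquiv_fixing {M n a : ℕ} (hM : M ≠ 0) (hn : n ≠ 0) (ha : a.Coprime n)
    (h : a ≡ 1 [MOD n.gcd M]) :
    ∃ σ : cycloField (M * n) ≃ₐ[ℚ] cycloField (M * n),
      (∀ x : cycloField (M * n), (x : ℂ) ∈ cycloField M → σ x = x) ∧
      ∀ x : cycloField (M * n), x ^ n = 1 → σ x = x ^ a := by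
  obtain ⟨t, htn, htM⟩ := Nat.chineseRemainder' h
  have htco : t.Coprime (M * n) :=
    Nat.Coprime.mul_right (by simpa [Nat.coprime_comm, Nat.Coprime] using htM.gcd_eq)
      (by simpa [Nat.Coprime] using (htn.gcd_eq).trans ha)
  obtain ⟨σ, hσ⟩ := exists_algEquiv_pow_of_coprime (mul_ne_zero hM hn) htco
  refine ⟨σ, fun x hx => ?_, fun x hx => ?_⟩
  · set ι := inclusion (cycloField_mono (mul_ne_zero hM hn) (dvd_mul_right M n))
    have hι : (σ : cycloField (M * n) →ₐ[ℚ] cycloField (M * n)).comp ι = ι := by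
      refine adjoin_algHom_ext ℚ fun y hy => ?_
      rw [Set.mem_singleton_iff] at hy
      subst hy
      have h1 : ι (gen M) ^ M = 1 := by
        rw [← map_pow, (isPrimitiveRoot_gen hM).pow_eq_one, map_one]
      show σ (ι (gen M)) = ι (gen M)
      rw [hσ _ (by rw [pow_mul, h1, one_pow]), pow_eq_pow_of_modEq htM h1, pow_one]
    exact DFunLike.congr_fun hι ⟨x, hx⟩
  · rw [hσ x (by rw [pow_mul', hx, one_pow]), pow_eq_pow_of_modEq htn hx]

lemma not_isSquare_of_algEquiv {M N : ℕ} (hN : N ≠ 0) (hMN : M ∣ N)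
    (σ : cycloField N ≃ₐ[ℚ] cycloField N)
    (hσ : ∀ x : cycloField N, (x : ℂ) ∈ cycloField M → σ x = x)
    {w : cycloField N} (hw : σ w = -w) {r : ℤ} (hr0 : r ≠ 0) (hr : w ^ 2 = r) :
    ¬ IsSquare (r : cycloField M) := by
  have hw0 : w ≠ 0 := by
    rintro rfl
    exact hr0 (by simpa using hr.symm)
  rintro ⟨z, hz⟩
  set z' := inclusion (cycloField_mono hN hMN) z
  have hσz : σ z' = z' := hσ z' (by rw [coe_inclusion]; exact z.2)
  have hz' : z' ^ 2 = w ^ 2 := by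
    rw [hr, ← map_intCast (inclusion (cycloField_mono hN hMN)), hz, map_mul, sq]
  have hσw : σ w = w := by
    rcases sq_eq_sq_iff_eq_or_eq_neg.mp hz' with h | h
    · rwa [← h]
    · rw [← neg_eq_iff_eq_neg.mpr h, map_neg, hσz]
  exact hw0 (CharZero.eq_neg_self_iff.mp (hσw.symm.trans hw))

lemma isSquare_neg_one : IsSquare ((-1 : ℤ) : cycloField 4) :=
  ⟨gen 4, by
    rw [← sq, (isPrimitiveRoot_gen (by norm_num)).pow_eq_neg_one (k := 2) (by norm_num)]
    simp⟩

lemma isSquare_two : IsSquare ((2 : ℤ) : cycloField 8) := by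
  have h4 := (isPrimitiveRoot_gen (n := 8) (by norm_num)).pow_eq_neg_one (k := 4) (by norm_num)
  refine ⟨gen 8 + (1 : ℤ) * (gen 8)⁻¹, ?_⟩
  rw [← sq, sq_add_mul_inv (Or.inl rfl) h4]
  simp

lemma isSquare_oddStar_prime {p : ℕ} (hp : p.Prime) (hp2 : p ≠ 2) :
    IsSquare (oddStar p : cycloField p) := by
  have : Fact p.Prime := ⟨hp⟩
  have hζ := isPrimitiveRoot_gen hp.ne_zero
  exact ⟨quadGaussSum p hζ.pow_eq_one, by rw [← sq, quadGaussSum_sq hp2 hζ]⟩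

lemma isSquare_oddStar {c : ℤ} (hc : Squarefree c) (hodd : Odd c) :
    IsSquare (oddStar c : cycloField c.natAbs) := by
  have hc0 : c.natAbs ≠ 0 := Int.natAbs_ne_zero.mpr hc.ne_zero
  rw [oddStar_eq_prod hc hodd, Int.cast_prod]
  refine Finset.isSquare_prod _ fun p hp => isSquare_intCast_of_dvd hc0
    (Nat.dvd_of_mem_primeFactors hp) (isSquare_oddStar_prime (Nat.prime_of_mem_primeFactors hp) ?_)
  rintro rfl
  exact (Int.not_even_iff_odd.mpr hodd) (even_iff_two_dvd.mpr
    (Int.natAbs_dvd_natAbs.mp (by simpa using Nat.dvd_of_mem_primeFactors hp)))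

lemma isSquare_of_squarefree_of_odd {c : ℤ} (hc : Squarefree c) (hodd : Odd c) :
    IsSquare (c : cycloField (4 * c.natAbs)) := by
  have hN : 4 * c.natAbs ≠ 0 := by simp [hc.ne_zero]
  rw [← isSquare_oddStar_iff (isSquare_intCast_of_dvd hN (dvd_mul_right 4 _) isSquare_neg_one)]
  exact isSquare_intCast_of_dvd hN (dvd_mul_left _ 4) (isSquare_oddStar hc hodd)

lemma isSquare_of_squarefree {b : ℤ} (hb : Squarefree b) :
    IsSquare (b : cycloField (4 * b.natAbs)) := by
  rcases Int.even_or_odd b with ⟨c, rfl⟩ | hodd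
  · rw [← two_mul] at hb ⊢
    have hc : Squarefree c := hb.squarefree_of_dvd (dvd_mul_left c 2)
    have hodd : Odd c := odd_of_squarefree_two_mul hb
    have hN : 4 * (2 * c).natAbs ≠ 0 := by simp [hc.ne_zero]
    have h8 : 4 * (2 * c).natAbs = 8 * c.natAbs := by rw [Int.natAbs_mul]; ring
    rw [Int.cast_mul]
    exact (isSquare_intCast_of_dvd hN (by rw [h8]; exact dvd_mul_right 8 _) isSquare_two).mul
      (isSquare_intCast_of_dvd hN (by rw [h8]; exact Nat.mul_dvd_mul_right (by norm_num) _)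
        (isSquare_of_squarefree_of_odd hc hodd))
  · exact isSquare_of_squarefree_of_odd hb hodd

lemma gcd_two_pow_dvd {k M : ℕ} (h : ¬ 2 ^ (k + 1) ∣ M) : Nat.gcd (2 ^ (k + 1)) M ∣ 2 ^ k := by
  obtain ⟨i, hi, hg⟩ := (Nat.dvd_prime_pow Nat.prime_two).mp (Nat.gcd_dvd_left (2 ^ (k + 1)) M)
  rcases (by omega : i ≤ k ∨ i = k + 1) with hik | rfl
  · exact hg ▸ pow_dvd_pow 2 hik
  · exact absurd (hg ▸ Nat.gcd_dvd_right _ M) h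

lemma not_isSquare_neg_one {M : ℕ} (hM : M ≠ 0) (h4 : ¬ 4 ∣ M) :
    ¬ IsSquare ((-1 : ℤ) : cycloField M) := by
  have hN : M * 4 ≠ 0 := mul_ne_zero hM four_ne_zero
  obtain ⟨σ, hfix, hσ⟩ := exists_algEquiv_fixing hM four_ne_zero (a := 3) (by decide)
    (Nat.ModEq.of_dvd (gcd_two_pow_dvd (k := 1) h4) rfl)
  have hζ := (isPrimitiveRoot_gen hN).pow (Nat.pos_of_ne_zero hN) rfl
  have h2 : (gen (M * 4) ^ M) ^ 2 = -1 := hζ.pow_eq_neg_one (k := 2) two_ne_zero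
  refine not_isSquare_of_algEquiv hN (dvd_mul_right M 4) σ hfix (w := gen (M * 4) ^ M) ?_
    (by norm_num) (by rw [h2]; simp)
  rw [hσ _ hζ.pow_eq_one]
  linear_combination (gen (M * 4) ^ M) * h2

lemma not_isSquare_two_mul {M : ℕ} (hM : M ≠ 0) (h8 : ¬ 8 ∣ M) {ε : ℤ}
    (hε : ε = 1 ∨ ε = -1) : ¬ IsSquare ((2 * ε : ℤ) : cycloField M) := by
  have hN : M * 8 ≠ 0 := mul_ne_zero hM (by norm_num)
  obtain ⟨σ, hfix, hσ⟩ := exists_algEquiv_fixing hM (by norm_num : 8 ≠ 0) (a := 5) (by decide)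
    (Nat.ModEq.of_dvd (gcd_two_pow_dvd (k := 2) h8) rfl)
  have hζ := (isPrimitiveRoot_gen hN).pow (Nat.pos_of_ne_zero hN) rfl
  have h4 : (gen (M * 8) ^ M) ^ 4 = -1 := hζ.pow_eq_neg_one (k := 4) (by norm_num)
  refine not_isSquare_of_algEquiv hN (dvd_mul_right M 8) σ hfix
    (map_add_mul_inv σ ε h4 (hσ _ hζ.pow_eq_one)) (by rcases hε with rfl | rfl <;> norm_num)
    (by rw [sq_add_mul_inv hε h4]; push_cast; ring)

lemma not_isSquare_oddStar_prime {M p : ℕ} (hM : M ≠ 0) (hp : p.Prime) (hp2 : p ≠ 2)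
    (hpM : ¬ p ∣ M) : ¬ IsSquare (oddStar p : cycloField M) := by
  have : Fact p.Prime := ⟨hp⟩
  have hN : M * p ≠ 0 := mul_ne_zero hM hp.ne_zero
  obtain ⟨g, hg⟩ := quadraticChar_exists_neg_one (F := ZMod p) (by rwa [ZMod.ringChar_zmod_n])
  have hg0 : g ≠ 0 := by rintro rfl; simp at hg
  have hga : g.val.Coprime p :=
    (ZMod.isUnit_iff_coprime _ _).mp (by rw [ZMod.natCast_zmod_val]; exact hg0.isUnit)
  obtain ⟨σ, hfix, hσ⟩ := exists_algEquiv_fixing hM hp.ne_zero hga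
    (by rw [(hp.coprime_iff_not_dvd.mpr hpM : Nat.gcd p M = 1)]; exact Nat.modEq_one)
  have hζ := (isPrimitiveRoot_gen hN).pow (Nat.pos_of_ne_zero hN) rfl
  refine not_isSquare_of_algEquiv hN (dvd_mul_right M p) σ hfix
    (map_quadGaussSum σ hζ.pow_eq_one (hσ _ hζ.pow_eq_one) (by simpa using hg))
    (by rcases oddStar_eq_or_eq_neg p with h | h <;> rw [h] <;> simp [hp.ne_zero])
    (quadGaussSum_sq hp2 hζ)

lemma prime_dvd_of_isSquare {b : ℤ} (hb : Squarefree b) {m : ℕ} (hm : m ≠ 0)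
    (hsq : IsSquare (b : cycloField m)) {p : ℕ} (hp : p.Prime) (hp2 : p ≠ 2)
    (hpb : (p : ℤ) ∣ b) : p ∣ m := by
  -- `p ∤ 4m|c|`, yet `√c` and `√-1` lie in `ℚ(ζ_{4m|c|})`, so `√(pc)` would give `√p*` there.
  by_contra hpm
  obtain ⟨c, rfl⟩ := hpb
  have hc : Squarefree c := hb.squarefree_of_dvd (dvd_mul_left c p)
  have hM : m * (4 * c.natAbs) ≠ 0 := mul_ne_zero hm (by simp [hc.ne_zero])
  have hpM : ¬ p ∣ m * (4 * c.natAbs) := by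
    simp only [hp.dvd_mul, not_or]
    refine ⟨hpm, fun h => hp2 ((Nat.prime_dvd_prime_iff_eq hp Nat.prime_two).mp
      (hp.dvd_of_dvd_pow (n := 2) h)), fun h => ?_⟩
    obtain ⟨d, rfl⟩ := Int.natCast_dvd.mpr h
    exact hp.not_isUnit (Int.ofNat_isUnit.mp (hb _ ⟨d, by ring⟩))
  have hneg : IsSquare ((-1 : ℤ) : cycloField (m * (4 * c.natAbs))) :=
    isSquare_intCast_of_dvd hM (dvd_mul_of_dvd_right (dvd_mul_right 4 _) m) isSquare_neg_one
  refine not_isSquare_oddStar_prime hM hp hp2 hpM ((isSquare_oddStar_iff hneg p).mpr ?_)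
  refine isSquare_of_isSquare_mul_sq hc.ne_zero ?_
  have := (isSquare_intCast_of_dvd hM (dvd_mul_right m _) hsq).mul
    (isSquare_intCast_of_dvd hM (dvd_mul_left _ m) (isSquare_of_squarefree hc))
  rw [← Int.cast_mul] at this
  rwa [show (p : ℤ) * c ^ 2 = p * c * c by ring]

lemma natAbs_dvd_of_isSquare {b : ℤ} (hb : Squarefree b) {m : ℕ} (hm : m ≠ 0)
    (hsq : IsSquare (b : cycloField m)) {c : ℤ} (hcb : c ∣ b) (hc : Odd c) : c.natAbs ∣ m := by
  rw [← Nat.prod_primeFactors_of_squarefree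
    (Int.squarefree_natAbs.mpr (hb.squarefree_of_dvd hcb))]
  refine Finset.prod_primes_dvd m (fun q hq => (Nat.prime_of_mem_primeFactors hq).prime)
    fun q hq => ?_
  have hqc : (q : ℤ) ∣ c := Int.natCast_dvd.mpr (Nat.dvd_of_mem_primeFactors hq)
  refine prime_dvd_of_isSquare hb hm hsq (Nat.prime_of_mem_primeFactors hq) ?_ (hqc.trans hcb)
  rintro rfl
  exact Int.not_even_iff_odd.mpr hc (even_iff_two_dvd.mpr hqc)

lemma isSquare_mul_oddStar {b c : ℤ} {m : ℕ} (hm : m ≠ 0) (hsq : IsSquare (b : cycloField m))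
    (hc : Squarefree c) (hodd : Odd c) :
    IsSquare ((b * oddStar c : ℤ) : cycloField (m * c.natAbs)) := by
  have hM : m * c.natAbs ≠ 0 := mul_ne_zero hm (by simp [hc.ne_zero])
  rw [Int.cast_mul]
  exact (isSquare_intCast_of_dvd hM (dvd_mul_right _ _) hsq).mul
    (isSquare_intCast_of_dvd hM (dvd_mul_left _ _) (isSquare_oddStar hc hodd))

lemma four_mul_dvd_of_isSquare_of_odd {b : ℤ} (hb : Squarefree b) {m : ℕ} (hm : m ≠ 0)
    (hsq : IsSquare (b : cycloField m)) (hodd : Odd b) (h41 : ¬ b % 4 = 1) :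
    4 * b ∣ (m : ℤ) := by
  have hb4 : Nat.Coprime 4 b.natAbs :=
    Nat.Coprime.pow_left 2 (Nat.coprime_two_left.mpr (Int.natAbs_odd.mpr hodd))
  have h4 : 4 ∣ m := by
    by_contra h4
    refine not_isSquare_neg_one (mul_ne_zero hm (by simp [hb.ne_zero])) (M := m * b.natAbs)
      (fun h => h4 (hb4.dvd_of_dvd_mul_right h)) (isSquare_of_isSquare_mul_sq hb.ne_zero ?_)
    have h := isSquare_mul_oddStar hm hsq hb hodd
    rwa [show oddStar b = -b by simp [oddStar, h41], show b * -b = -1 * b ^ 2 by ring] at h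
  rw [← Int.natAbs_dvd_natAbs, Int.natAbs_mul, Int.natAbs_natCast]
  exact hb4.mul_dvd_of_dvd_of_dvd h4 (natAbs_dvd_of_isSquare hb hm hsq dvd_rfl hodd)

lemma four_mul_dvd_of_isSquare_of_even {b : ℤ} (hb : Squarefree b) {m : ℕ} (hm : m ≠ 0)
    (hsq : IsSquare (b : cycloField m)) (heven : Even b) : 4 * b ∣ (m : ℤ) := by
  obtain ⟨c, rfl⟩ := heven
  rw [← two_mul] at hb hsq ⊢
  have hc : Squarefree c := hb.squarefree_of_dvd (dvd_mul_left c 2)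
  have hodd : Odd c := odd_of_squarefree_two_mul hb
  have hc8 : Nat.Coprime 8 c.natAbs :=
    Nat.Coprime.pow_left 3 (Nat.coprime_two_left.mpr (Int.natAbs_odd.mpr hodd))
  have h8 : 8 ∣ m := by
    by_contra h8
    obtain ⟨ε, hε, hεc⟩ : ∃ ε : ℤ, (ε = 1 ∨ ε = -1) ∧ oddStar c = ε * c := by
      rcases oddStar_eq_or_eq_neg c with h | h
      exacts [⟨1, Or.inl rfl, by simp [h]⟩, ⟨-1, Or.inr rfl, by simp [h]⟩]
    refine not_isSquare_two_mul (mul_ne_zero hm (by simp [hc.ne_zero])) (M := m * c.natAbs)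
      (fun h => h8 (hc8.dvd_of_dvd_mul_right h)) hε
      (isSquare_of_isSquare_mul_sq hc.ne_zero ?_)
    have h := isSquare_mul_oddStar hm hsq hc hodd
    rwa [hεc, show 2 * c * (ε * c) = 2 * ε * c ^ 2 by ring] at h
  rw [← Int.natAbs_dvd_natAbs, Int.natAbs_mul, Int.natAbs_mul, Int.natAbs_natCast]
  have := hc8.mul_dvd_of_dvd_of_dvd h8
    (natAbs_dvd_of_isSquare hb hm hsq (dvd_mul_left c 2) hodd)
  simpa [← mul_assoc] using this

theorem isSquare_intCast_iff_quadDisc_dvd {b : ℤ} (hb : Squarefree b) {m : ℕ} (hm : m ≠ 0) :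
    IsSquare (b : cycloField m) ↔ quadDisc b ∣ m := by
  rw [quadDisc_intCast hb]
  constructor
  · intro hsq
    split_ifs with h41
    · have hodd : Odd b := Int.odd_iff.mpr (by omega)
      exact Int.natAbs_dvd.mp (Int.natCast_dvd_natCast.mpr
        (natAbs_dvd_of_isSquare hb hm hsq dvd_rfl hodd))
    · rcases Int.even_or_odd b with heven | hodd
      exacts [four_mul_dvd_of_isSquare_of_even hb hm hsq heven,
        four_mul_dvd_of_isSquare_of_odd hb hm hsq hodd h41]
  · split_ifs with h41 <;> intro h
    · have hodd : Odd b := Int.odd_iff.mpr (by omega)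
      refine isSquare_intCast_of_dvd hm (Int.natAbs_dvd_natAbs.mpr h) ?_
      simpa [oddStar, h41] using isSquare_oddStar hb hodd
    · refine isSquare_intCast_of_dvd hm ?_ (isSquare_of_squarefree hb)
      simpa [Int.natAbs_mul] using Int.natAbs_dvd_natAbs.mpr h

lemma intUnit_val {b : ℤ} (hb : b ≠ 0) : (intUnit b : ℚ) = b := by
  simp [intUnit, hb]

lemma exists_intUnit_mul_sq (x : ℚˣ) :
    ∃ b : ℤ, Squarefree b ∧ ∃ u : ℚˣ, x = intUnit b * u ^ 2 := by
  set q := (x : ℚ)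
  obtain ⟨b, s, hb, hbs⟩ := exists_squarefree_mul_sq (q.num * q.den)
  have hx : q = b * ((s : ℚ) / q.den) ^ 2 := by
    have h : (q.num : ℚ) * q.den = b * s ^ 2 := by exact_mod_cast hbs
    rw [div_pow, mul_div_assoc', ← h, eq_div_iff (by positivity), sq, ← mul_assoc,
      Rat.mul_den_eq_num]
  have hs : (s : ℚ) / q.den ≠ 0 := by
    rintro h
    exact x.ne_zero (hx.trans (by simp [h]))
  refine ⟨b, hb, Units.mk0 _ hs, Units.ext ?_⟩
  rw [Units.val_mul, Units.val_pow_eq_pow_val, Units.val_mk0, intUnit_val hb.ne_zero]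
  exact hx

lemma mk_eq_mk_iff {n : ℕ} {x y : ℚˣ} :
    (QuotientGroup.mk x : ℚˣ ⧸ powSubgroup n) = QuotientGroup.mk y ↔
      ∃ u : ℚˣ, y = x * u ^ n := by
  rw [QuotientGroup.eq]
  refine exists_congr fun u => ?_
  rw [powMonoidHom_apply, eq_inv_mul_iff_mul_eq, eq_comm]

end CyclotomicSqrt

open CyclotomicSqrt

theorem tildeGammaMD_two_general (Γ : Subgroup ℚˣ) (m : ℕ) (hm : 0 < m) :
    tildeGammaMD Γ m 2 =
      {c | c ∈ GammaMod Γ 2 ∧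
        ∃ b : ℤ, Squarefree b ∧
          (QuotientGroup.mk (intUnit b) : ℚˣ ⧸ powSubgroup 2) = c ∧
          quadDisc (b : ℚ) ∣ (m : ℤ)} := by
  ext c
  constructor
  · rintro ⟨x, rfl, ⟨γ, hγ, y, rfl⟩, hsq⟩
    obtain ⟨b, hb, u, hu⟩ := exists_intUnit_mul_sq (γ * y ^ 2)
    refine ⟨⟨γ, hγ, mk_eq_mk_iff.mpr ⟨y, rfl⟩⟩, b, hb, mk_eq_mk_iff.mpr ⟨u, hu⟩,
      (isSquare_intCast_iff_quadDisc_dvd hb hm.ne').mp ?_⟩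
    rw [← isSquare_ratCast_iff, hu, Units.val_mul, Units.val_pow_eq_pow_val,
      intUnit_val hb.ne_zero, Rat.cast_mul, Rat.cast_pow, isSquare_mul_sq_iff (by simp)] at hsq
    simpa using hsq
  · rintro ⟨⟨γ, hγ, rfl⟩, b, hb, hbγ, hdisc⟩
    obtain ⟨u, hu⟩ := mk_eq_mk_iff.mp hbγ
    refine ⟨intUnit b, hbγ, ⟨γ, hγ, u⁻¹, by rw [hu]; group⟩, ?_⟩
    rw [← isSquare_ratCast_iff, intUnit_val hb.ne_zero]
    simpa using (isSquare_intCast_iff_quadDisc_dvd hb hm.ne').mpr hdisc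

/-- **Proposition.** For even `m`,
`tildeΓ_{m,2} = {γ ∈ Γ(2) : disc(ℚ(√γ')) ∣ m}`. -/
theorem tildeGammaMD_two (Γ : Subgroup ℚˣ) (hFG : Γ.FG) (m : ℕ) (hm : 0 < m)
    (h2 : 2 ∣ m) :
    tildeGammaMD Γ m 2 =
      {c | c ∈ GammaMod Γ 2 ∧
        ∃ b : ℤ, Squarefree b ∧
          (QuotientGroup.mk (intUnit b) : ℚˣ ⧸ powSubgroup 2) = c ∧
          quadDisc (b : ℚ) ∣ (m : ℤ)} :=
  tildeGammaMD_two_general Γ m hm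
end

section
/- Let a ∈ ℚ, a > 0, a ≠ 1, with a = a₀^h where a₀ > 0 is not a perfect power of a rational number, and let Γ = ⟨−1,a⟩. Then for every integer m ≥ 1, |Γ(m)| = gcd(2,m)·m/gcd(m,h). -/
/- Common definitions: finitely generated multiplicative subgroups `Γ ⊆ ℚˣ`,
the quotients `Γ(n) = Γ·(ℚ*)ⁿ/(ℚ*)ⁿ`, the invariants `δ(γ)`, the group `tildeΓ(m)`,
the constants `A(Γ,m)` and `B_{Γ,k}`, and the density `ρ(Γ,m)`. -/

open scoped Classical

/-!
Modulo `m`-th powers, `⟨-1, a⟩(m)` is generated by the classes of `-1` and `a`. Their cyclic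
subgroups meet trivially, because an `m`-th power that is `±1` times a positive rational
is `±1` times an `m`-th power. The class of `-1` has order `gcd(2, m)` (it is an `m`-th
power exactly when `m` is odd), and since `a₀` is not a perfect power, `a₀ⁿ` is an `m`-th
power only when `m ∣ n`, so the class of `a = a₀ʰ` has order `m / gcd(m, h)`.
-/

open Subgroup QuotientGroup

theorem orderOf_eq_of_pow_eq_one_iff {M : Type*} [Monoid M] {x : M} {n : ℕ}
    (h : ∀ k : ℕ, x ^ k = 1 ↔ n ∣ k) : orderOf x = n :=
  Nat.dvd_right_iff_eq.mp fun k => by rw [orderOf_dvd_iff_pow_eq_one, h]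

theorem Subgroup.card_sup_of_disjoint {G : Type*} [CommGroup G] {H K : Subgroup G}
    (hHK : Disjoint H K) : Nat.card ↥(H ⊔ K) = Nat.card H * Nat.card K := by
  let φ := H.subtype.noncommCoprod K.subtype fun _ _ => Commute.all _ _
  have hφ : Function.Injective φ :=
    (MonoidHom.noncommCoprod_injective _ _ _).mpr
      ⟨H.subtype_injective, K.subtype_injective, by simpa using hHK⟩
  have hrange : H ⊔ K = φ.range := by
    rw [MonoidHom.noncommCoprod_range, range_subtype, range_subtype]
  rw [hrange, ← Nat.card_prod]
  exact (Nat.card_congr (MonoidHom.ofInjective hφ).toEquiv).symm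

theorem Subgroup.card_closure_pair {G : Type*} [CommGroup G] {x y : G}
    (hxy : Disjoint (zpowers x) (zpowers y)) :
    Nat.card (Subgroup.closure {x, y}) = orderOf x * orderOf y := by
  rw [Set.insert_eq, closure_union, ← zpowers_eq_closure, ← zpowers_eq_closure,
    card_sup_of_disjoint hxy, Nat.card_zpowers, Nat.card_zpowers]

theorem Nat.div_gcd_dvd_iff_dvd_mul {m h k : ℕ} (hm : 0 < m) :
    m / m.gcd h ∣ k ↔ m ∣ h * k := by
  have hg : 0 < m.gcd h := Nat.gcd_pos_of_pos_left h hm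
  rw [← (Nat.coprime_div_gcd_div_gcd hg).dvd_mul_left, ← Nat.mul_dvd_mul_iff_left hg,
    Nat.mul_div_cancel' (Nat.gcd_dvd_left m h), ← mul_assoc,
    Nat.mul_div_cancel' (Nat.gcd_dvd_right m h)]

theorem dvd_of_pow_eq_pow_of_forall_ne_pow {K : Type*} [Field K] [LinearOrder K]
    [IsStrictOrderedRing K] {a q : K} {m n : ℕ} (ha : 0 < a)
    (hnp : ∀ (b : K) (k : ℕ), 2 ≤ k → a ≠ b ^ k) (hm : m ≠ 0) (h : a ^ n = q ^ m) :
    m ∣ n := by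
  set g := n.gcd m
  have hg : g ≠ 0 := Nat.gcd_ne_zero_right hm
  have hreduced : a ^ (n / g) = |q| ^ (m / g) := by
    refine (pow_left_inj₀ (by positivity) (by positivity) hg).mp ?_
    rw [← pow_mul, ← pow_mul, Nat.div_mul_cancel (Nat.gcd_dvd_left n m),
      Nat.div_mul_cancel (Nat.gcd_dvd_right n m), pow_abs, ← h, abs_of_pos (pow_pos ha n)]
  obtain ⟨c, hc, -⟩ :=
    (pow_eq_pow_iff_of_coprime (Nat.coprime_div_gcd_div_gcd (Nat.pos_of_ne_zero hg))).mp
      hreduced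
  have hpos : 0 < m / g :=
    Nat.div_pos (Nat.le_of_dvd (Nat.pos_of_ne_zero hm) (Nat.gcd_dvd_right n m))
      (Nat.pos_of_ne_zero hg)
  have hone : m / g = 1 := by
    by_contra hne
    exact hnp c (m / g) (by omega) hc
  rw [← Nat.eq_of_dvd_of_div_eq_one (Nat.gcd_dvd_right n m) hone]
  exact Nat.gcd_dvd_left n m

theorem pow_mem_powSubgroup_iff {A : ℚˣ} (hA : 0 < (A : ℚ))
    (hnp : ∀ (b : ℚ) (k : ℕ), 2 ≤ k → (A : ℚ) ≠ b ^ k) {m n : ℕ} (hm : m ≠ 0) :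
    A ^ n ∈ powSubgroup m ↔ m ∣ n := by
  constructor
  · rintro ⟨r, hr : r ^ m = A ^ n⟩
    refine dvd_of_pow_eq_pow_of_forall_ne_pow hA hnp hm (q := (r : ℚ)) ?_
    exact_mod_cast (congrArg Units.val hr).symm
  · rintro ⟨t, rfl⟩
    exact ⟨A ^ t, (pow_mul' A m t).symm⟩

theorem neg_one_pow_mem_powSubgroup_iff {m k : ℕ} :
    (-1 : ℚˣ) ^ k ∈ powSubgroup m ↔ Nat.gcd 2 m ∣ k := by
  rcases Nat.even_or_odd m with hm | hm
  · rw [Nat.gcd_eq_left hm.two_dvd]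
    constructor
    · rintro ⟨r, hr : r ^ m = (-1) ^ k⟩
      have hr' : (r : ℚ) ^ m = (-1) ^ k := by simpa using congrArg Units.val hr
      rcases Nat.even_or_odd k with hk | hk
      · exact hk.two_dvd
      · have := hm.pow_nonneg (r : ℚ)
        rw [hr', hk.neg_one_pow] at this
        norm_num at this
    · intro hk
      exact ⟨1, show (1 : ℚˣ) ^ m = _ by rw [one_pow, (even_iff_two_dvd.mpr hk).neg_one_pow]⟩
  · rw [Nat.coprime_two_left.mpr hm]
    refine iff_of_true ⟨(-1) ^ k, ?_⟩ (one_dvd k)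
    change ((-1) ^ k) ^ m = (-1 : ℚˣ) ^ k
    rw [← pow_mul, mul_comm, pow_mul, hm.neg_one_pow]

/-- If `s * p = r ^ m`, then `s = (r / |r|) ^ m`. -/
theorem mem_powSubgroup_of_mul_mem {s p : ℚˣ} (hs : |(s : ℚ)| = 1) (hp : 0 < (p : ℚ))
    {m : ℕ} (h : s * p ∈ powSubgroup m) : s ∈ powSubgroup m := by
  obtain ⟨r, hr : r ^ m = s * p⟩ := h
  have hr' : (r : ℚ) ^ m = s * p := by exact_mod_cast congrArg Units.val hr
  have habs : |(r : ℚ)| ^ m = p := by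
    rw [pow_abs, hr', abs_mul, hs, one_mul, abs_of_pos hp]
  refine ⟨Units.mk0 ((r : ℚ) / |(r : ℚ)|) (by simp), Units.ext ?_⟩
  simp [div_pow, hr', habs, hp.ne']

theorem GammaMod_negOneAGroup (u : ℚˣ) (m : ℕ) :
    GammaMod (negOneAGroup u) m =
      Subgroup.closure {(mk (-1) : ℚˣ ⧸ powSubgroup m), mk u} := by
  have hgen : {v : ℚˣ | (v : ℚ) = -1 ∨ (v : ℚ) = u} = {-1, u} := by
    ext v
    simp only [Set.mem_ofPred_eq, Set.mem_insert_iff, Set.mem_singleton_iff, Units.ext_iff,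
      Units.val_neg, Units.val_one]
  rw [GammaMod, negOneAGroup, hgen, MonoidHom.map_closure, Set.image_pair]
  rfl

theorem disjoint_zpowers_mk_neg_one {A : ℚˣ} (hA : 0 < (A : ℚ)) (m : ℕ) :
    Disjoint (zpowers (mk (-1) : ℚˣ ⧸ powSubgroup m)) (zpowers (mk A)) := by
  rw [disjoint_def]
  rintro - ⟨i, rfl⟩ ⟨j, hj⟩
  change (mk A : ℚˣ ⧸ powSubgroup m) ^ j = mk (-1) ^ i at hj
  rw [← mk_zpow, ← mk_zpow, QuotientGroup.eq, mul_comm] at hj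
  change (mk ((-1) ^ i) : ℚˣ ⧸ powSubgroup m) = 1
  rw [eq_one_iff]
  refine mem_powSubgroup_of_mul_mem ?_ ?_ hj
  · simp
  · simpa using zpow_pos hA j

theorem orderOf_mk_neg_one (m : ℕ) :
    orderOf (mk (-1) : ℚˣ ⧸ powSubgroup m) = Nat.gcd 2 m :=
  orderOf_eq_of_pow_eq_one_iff fun k => by
    rw [← mk_pow, eq_one_iff, neg_one_pow_mem_powSubgroup_iff]

theorem orderOf_mk_pow {A : ℚˣ} (hA : 0 < (A : ℚ))
    (hnp : ∀ (b : ℚ) (k : ℕ), 2 ≤ k → (A : ℚ) ≠ b ^ k) (h : ℕ) {m : ℕ} (hm : 0 < m) :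
    orderOf (mk (A ^ h) : ℚˣ ⧸ powSubgroup m) = m / m.gcd h :=
  orderOf_eq_of_pow_eq_one_iff fun k => by
    rw [← mk_pow, eq_one_iff, ← pow_mul, pow_mem_powSubgroup_iff hA hnp hm.ne',
      Nat.div_gcd_dvd_iff_dvd_mul hm]

theorem card_GammaMod_negOneA_general (a a₀ : ℚ) (h : ℕ)
    (ha₀pos : 0 < a₀)
    (hnp : ∀ (b : ℚ) (k : ℕ), 2 ≤ k → a₀ ≠ b ^ k)
    (hah : a = a₀ ^ h) :
    ∀ m : ℕ, 1 ≤ m →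
      Nat.card (GammaMod (negOneAGroup a) m) = Nat.gcd 2 m * m / Nat.gcd m h := by
  intro m hm
  set A : ℚˣ := Units.mk0 a₀ ha₀pos.ne'
  have ha : a = ((A ^ h : ℚˣ) : ℚ) := by simp [A, hah]
  have hApos : 0 < ((A ^ h : ℚˣ) : ℚ) := by simpa [A] using pow_pos ha₀pos h
  rw [ha, GammaMod_negOneAGroup, card_closure_pair (disjoint_zpowers_mk_neg_one hApos m),
    orderOf_mk_neg_one, orderOf_mk_pow ha₀pos hnp h hm,
    Nat.mul_div_assoc _ (Nat.gcd_dvd_left m h)]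

/-- **`|⟨−1,a⟩(m)| = (2,m)·m/(m,h)`** for `a = a₀^h` with `a₀ > 0` not a perfect power. -/
theorem card_GammaMod_negOneA (a a₀ : ℚ) (h : ℕ)
    (ha : 0 < a) (ha1 : a ≠ 1) (ha₀pos : 0 < a₀)
    (hnp : ∀ (b : ℚ) (k : ℕ), 2 ≤ k → a₀ ≠ b ^ k)
    (hh : 1 ≤ h) (hah : a = a₀ ^ h) :
    ∀ m : ℕ, 1 ≤ m →
      Nat.card (GammaMod (negOneAGroup a) m) = Nat.gcd 2 m * m / Nat.gcd m h :=
  card_GammaMod_negOneA_general a a₀ h ha₀pos hnp hah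
end

section
/- Let a ∈ ℚ, a > 0, a ≠ 1, with a = a₀^h and a₀ = a₁·a₂² as in the context, let Γ = ⟨−1,a⟩ and let α ≥ 1. Then the 2-torsion subgroup Γ(2^α)[2] of Γ(2^α) equals {(ℚ*)^{2^α}, −(ℚ*)^{2^α}, a₁^{2^{α−1}}·(ℚ*)^{2^α}, −a₁^{2^{α−1}}·(ℚ*)^{2^α}} if v₂(h) < α, and equals {(ℚ*)^{2^α}, −(ℚ*)^{2^α}} if v₂(h) ≥ α. -/
/- Common definitions: finitely generated multiplicative subgroups `Γ ⊆ ℚˣ`,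
the quotients `Γ(n) = Γ·(ℚ*)ⁿ/(ℚ*)ⁿ`, the invariants `δ(γ)`, the group `tildeΓ(m)`,
the constants `A(Γ,m)` and `B_{Γ,k}`, and the density `ρ(Γ,m)`. -/

open scoped Classical

/-! Modulo `2^α`-th powers the class `g` of `a₀` has order exactly `2^α`, because `a₀ > 0` is not
a perfect power; so `Γ(2^α)` is generated by the involution `-1` and `g^h`. An element `±g^(hk)`
squares to `1` iff `2^(α-1) ∣ hk`, and then `g^(hk)` is `1` or `g^(2^(α-1))`, which is the class of
`a₁^(2^(α-1))` since `a₀ = a₁ a₂²`. The value `g^(2^(α-1))` is attained iff `2^α ∤ h`, that is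
iff `v₂(h) < α`. -/

section TwoTorsion

variable {G : Type*} [CommGroup G] {g ε : G}

theorem zpow_mul_eq_self_of_odd {M : ℕ} (hg : g ^ (2 * M) = 1) {u : ℤ} (hu : Odd u) :
    g ^ ((M : ℤ) * u) = g ^ M := by
  obtain ⟨s, rfl⟩ := hu
  rw [show (M : ℤ) * (2 * s + 1) = ((2 * M : ℕ) : ℤ) * s + M by push_cast; ring,
    zpow_add, zpow_mul, zpow_natCast, hg, one_zpow, one_mul, zpow_natCast]

theorem zpow_eq_one_or_eq_pow_of_dvd {M : ℕ} (hg : g ^ (2 * M) = 1) {j : ℤ} (hj : (M : ℤ) ∣ j) :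
    g ^ j = 1 ∨ g ^ j = g ^ M := by
  obtain ⟨t, rfl⟩ := hj
  rcases Int.even_or_odd t with ⟨s, rfl⟩ | ht
  · left
    rw [show (M : ℤ) * (s + s) = ((2 * M : ℕ) : ℤ) * s by push_cast; ring,
      zpow_mul, zpow_natCast, hg, one_zpow]
  · exact Or.inr (zpow_mul_eq_self_of_odd hg ht)

theorem sq_zpow_eq_one_iff {α : ℕ} (hα : α ≠ 0) (hg : orderOf g = 2 ^ α) (j : ℤ) :
    (g ^ j) ^ 2 = 1 ↔ ((2 ^ (α - 1) : ℕ) : ℤ) ∣ j := by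
  rw [← zpow_natCast, ← zpow_mul, ← orderOf_dvd_iff_zpow_eq_one, hg, ← mul_pow_sub_one hα (2 : ℕ)]
  push_cast
  rw [mul_comm j, mul_dvd_mul_iff_left two_ne_zero]

theorem exists_mul_eq_two_pow_pred_mul_odd {α h : ℕ} (hh : ¬ 2 ^ α ∣ h) :
    ∃ k u : ℤ, Odd u ∧ (h : ℤ) * k = ((2 ^ (α - 1) : ℕ) : ℤ) * u := by
  obtain ⟨β, u, hu, rfl⟩ := Nat.exists_eq_two_pow_mul_odd (n := h) (by rintro rfl; simp at hh)
  have hβ : β < α := by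
    by_contra! hαβ
    exact hh (Dvd.dvd.mul_right (pow_dvd_pow 2 hαβ) u)
  refine ⟨2 ^ (α - 1 - β), u, by exact_mod_cast hu, ?_⟩
  push_cast
  rw [mul_right_comm, ← pow_add, show β + (α - 1 - β) = α - 1 by omega]

theorem pow_two_pow_pred_sq {α : ℕ} (hα : α ≠ 0) (hg : orderOf g = 2 ^ α) :
    (g ^ 2 ^ (α - 1)) ^ 2 = 1 := by
  rw [← pow_mul, mul_comm, mul_pow_sub_one hα (2 : ℕ), ← hg, pow_orderOf_eq_one]

theorem exists_eq_zpow_of_mem_closure_of_sq_eq_one {α h : ℕ} (hα : α ≠ 0)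
    (hg : orderOf g = 2 ^ α) (hε : ε ^ 2 = 1) {c : G} (hc : c ∈ Subgroup.closure {ε, g ^ h})
    (hc2 : c ^ 2 = 1) :
    ∃ j : ℤ, ((2 ^ (α - 1) : ℕ) : ℤ) ∣ h * j ∧ (c = g ^ (h * j) ∨ c = ε * g ^ (h * j)) := by
  obtain ⟨m, j, rfl⟩ := Subgroup.mem_closure_pair.mp hc
  rw [← zpow_natCast g h, ← zpow_mul] at hc2 ⊢
  have hεm : ε ^ m = 1 ∨ ε ^ m = ε ^ 1 :=
    zpow_eq_one_or_eq_pow_of_dvd (by rwa [mul_one]) (one_dvd m)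
  rcases hεm with hεm | hεm <;> rw [hεm] at hc2 ⊢
  · rw [one_mul] at hc2
    exact ⟨j, (sq_zpow_eq_one_iff hα hg _).mp hc2, Or.inl (one_mul _)⟩
  · rw [pow_one, mul_pow, hε, one_mul] at hc2
    exact ⟨j, (sq_zpow_eq_one_iff hα hg _).mp hc2, Or.inr (by rw [pow_one])⟩

theorem setOf_mem_closure_sq_eq_one_of_not_dvd {α h : ℕ} (hα : α ≠ 0)
    (hg : orderOf g = 2 ^ α) (hε : ε ^ 2 = 1) (hh : ¬ 2 ^ α ∣ h) :
    {c | c ∈ Subgroup.closure {ε, g ^ h} ∧ c ^ 2 = 1} =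
      {1, ε, g ^ 2 ^ (α - 1), ε * g ^ 2 ^ (α - 1)} := by
  have hg2 : g ^ (2 * 2 ^ (α - 1)) = 1 := by
    rw [mul_pow_sub_one hα (2 : ℕ), ← hg, pow_orderOf_eq_one]
  have hεmem : ε ∈ Subgroup.closure {ε, g ^ h} := Subgroup.subset_closure (by simp)
  have hM : g ^ 2 ^ (α - 1) ∈ Subgroup.closure {ε, g ^ h} := by
    obtain ⟨k, u, hu, hk⟩ := exists_mul_eq_two_pow_pred_mul_odd hh
    rw [← zpow_mul_eq_self_of_odd hg2 hu, ← hk, zpow_mul, zpow_natCast]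
    exact zpow_mem (Subgroup.subset_closure (by simp)) k
  have hM2 := pow_two_pow_pred_sq hα hg
  ext c
  simp only [Set.mem_ofPred_eq, Set.mem_insert_iff, Set.mem_singleton_iff]
  constructor
  · rintro ⟨hc, hc2⟩
    obtain ⟨j, hj, rfl | rfl⟩ := exists_eq_zpow_of_mem_closure_of_sq_eq_one hα hg hε hc hc2 <;>
      rcases zpow_eq_one_or_eq_pow_of_dvd hg2 hj with hgj | hgj <;> simp [hgj]
  · rintro (rfl | rfl | rfl | rfl)
    · exact ⟨one_mem _, one_pow 2⟩
    · exact ⟨hεmem, hε⟩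
    · exact ⟨hM, hM2⟩
    · exact ⟨mul_mem hεmem hM, by rw [mul_pow, hε, hM2, one_mul]⟩

theorem setOf_mem_closure_sq_eq_one_of_dvd {α h : ℕ} (hα : α ≠ 0)
    (hg : orderOf g = 2 ^ α) (hε : ε ^ 2 = 1) (hh : 2 ^ α ∣ h) :
    {c | c ∈ Subgroup.closure {ε, g ^ h} ∧ c ^ 2 = 1} = {1, ε} := by
  ext c
  simp only [Set.mem_ofPred_eq, Set.mem_insert_iff, Set.mem_singleton_iff]
  constructor
  · rintro ⟨hc, hc2⟩
    obtain ⟨j, -, rfl | rfl⟩ := exists_eq_zpow_of_mem_closure_of_sq_eq_one hα hg hε hc hc2 <;>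
      rw [orderOf_dvd_iff_zpow_eq_one.mp (hg ▸ Dvd.dvd.mul_right (by exact_mod_cast hh) j)] <;>
      simp
  · rintro (rfl | rfl)
    · exact ⟨one_mem _, one_pow 2⟩
    · exact ⟨Subgroup.subset_closure (by simp), hε⟩

end TwoTorsion

theorem natCast_dvd_of_zpow_eq_pow {K : Type*} [Field K] [LinearOrder K] [IsStrictOrderedRing K]
    {a : K} (ha : 0 < a) (hnp : ∀ (b : K) (k : ℕ), 2 ≤ k → a ≠ b ^ k)
    {m : ℤ} {n : ℕ} (hn : n ≠ 0) {b : K} (hab : a ^ m = b ^ n) : (n : ℤ) ∣ m := by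
  have habs : a ^ m = |b| ^ (n : ℤ) := by
    rw [zpow_natCast, pow_abs, ← hab, abs_of_pos (zpow_pos ha m)]
  -- Bézout: `gcd(m, n) = m x + n y` makes `a ^ gcd(m, n)` the `n`-th power `t ^ n`.
  set t := |b| ^ m.gcdA n * a ^ m.gcdB n
  have hpow : a ^ (m.gcd n : ℤ) = t ^ (n : ℤ) := by
    rw [Int.gcd_eq_gcd_ab, zpow_add₀ ha.ne', zpow_mul, habs, mul_zpow, ← zpow_mul,
      ← zpow_mul, ← zpow_mul, mul_comm (n : ℤ), mul_comm (n : ℤ)]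
  set d := m.gcd n
  obtain ⟨n', hn'⟩ : d ∣ n := Int.natCast_dvd_natCast.mp (Int.gcd_dvd_right m n)
  have hd : d ≠ 0 := fun h0 => hn (by rw [hn', h0, zero_mul])
  have ht : a = t ^ n' := by
    rw [zpow_natCast, zpow_natCast, hn', mul_comm, pow_mul] at hpow
    exact (pow_left_inj₀ ha.le (pow_nonneg (by positivity) _) hd).mp hpow
  have hn'1 : n' = 1 := by
    by_contra hne
    have hn'0 : n' ≠ 0 := fun h0 => hn (by rw [hn', h0, mul_zero])
    exact hnp t n' (by omega) ht
  rw [hn', hn'1, mul_one]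
  exact Int.gcd_dvd_left m n

theorem natUnit_val {b : ℕ} (hb : b ≠ 0) : (natUnit b : ℚ) = b := by
  simp [natUnit, intUnit, hb]

theorem zpow_mem_powSubgroup_iff {x : ℚˣ} (hx : 0 < (x : ℚ))
    (hnp : ∀ (b : ℚ) (k : ℕ), 2 ≤ k → (x : ℚ) ≠ b ^ k) {n : ℕ} (hn : n ≠ 0) {m : ℤ} :
    x ^ m ∈ powSubgroup n ↔ (n : ℤ) ∣ m := by
  constructor
  · rintro ⟨y, hy⟩
    have hyq : (x : ℚ) ^ m = (y : ℚ) ^ n := by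
      rw [← Units.val_zpow_eq_zpow_val, ← Units.val_pow_eq_pow_val, ← hy, powMonoidHom_apply]
    exact natCast_dvd_of_zpow_eq_pow hx hnp hn hyq
  · rintro ⟨j, rfl⟩
    exact ⟨x ^ j, by rw [powMonoidHom_apply, ← zpow_natCast, ← zpow_mul, mul_comm]⟩

theorem orderOf_mk_powSubgroup {x : ℚˣ} (hx : 0 < (x : ℚ))
    (hnp : ∀ (b : ℚ) (k : ℕ), 2 ≤ k → (x : ℚ) ≠ b ^ k) {n : ℕ} (hn : n ≠ 0) :
    orderOf (x : ℚˣ ⧸ powSubgroup n) = n := by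
  have hdvd (i : ℤ) : (orderOf (x : ℚˣ ⧸ powSubgroup n) : ℤ) ∣ i ↔ (n : ℤ) ∣ i := by
    rw [orderOf_dvd_iff_zpow_eq_one, ← QuotientGroup.mk_zpow, QuotientGroup.eq_one_iff,
      zpow_mem_powSubgroup_iff hx hnp hn]
  exact Int.natCast_inj.mp (Int.dvd_antisymm (by positivity) (by positivity)
    ((hdvd n).mpr dvd_rfl) ((hdvd _).mp dvd_rfl))

theorem GammaMod_negOneAGroup_s9 {a : ℚ} (ha : a ≠ 0) (n : ℕ) :
    GammaMod (negOneAGroup a) n =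
      Subgroup.closure {QuotientGroup.mk (-1), QuotientGroup.mk (Units.mk0 a ha)} := by
  have hgen : {u : ℚˣ | (u : ℚ) = -1 ∨ (u : ℚ) = a} = {-1, Units.mk0 a ha} := by
    ext u
    simp only [Set.mem_ofPred_eq, Set.mem_insert_iff, Set.mem_singleton_iff, Units.ext_iff,
      Units.val_neg, Units.val_one, Units.val_mk0]
  rw [GammaMod, negOneAGroup, hgen, MonoidHom.map_closure, Set.image_pair]
  rfl

theorem torsion_GammaMod_negOneA_general (a a₀ a₂ : ℚ) (h a₁ : ℕ)
    (ha₀pos : 0 < a₀)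
    (hnp : ∀ (b : ℚ) (k : ℕ), 2 ≤ k → a₀ ≠ b ^ k)
    (hh : 1 ≤ h) (hah : a = a₀ ^ h)
    (hdec : a₀ = (a₁ : ℚ) * a₂ ^ 2) (α : ℕ) (hα : 1 ≤ α) :
    (padicValNat 2 h < α →
      {c : ℚˣ ⧸ powSubgroup (2 ^ α) | c ∈ GammaMod (negOneAGroup a) (2 ^ α) ∧ c ^ 2 = 1} =
        {1, QuotientGroup.mk (-1),
         QuotientGroup.mk (natUnit a₁ ^ 2 ^ (α - 1)),
         QuotientGroup.mk (-(natUnit a₁ ^ 2 ^ (α - 1)))}) ∧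
    (α ≤ padicValNat 2 h →
      {c : ℚˣ ⧸ powSubgroup (2 ^ α) | c ∈ GammaMod (negOneAGroup a) (2 ^ α) ∧ c ^ 2 = 1} =
        {1, QuotientGroup.mk (-1)}) := by
  subst hah
  have hα₀ : α ≠ 0 := by omega
  have ha₁ : (a₁ : ℚ) ≠ 0 := left_ne_zero_of_mul (hdec ▸ ha₀pos.ne')
  have ha₂ : a₂ ≠ 0 := (pow_ne_zero_iff two_ne_zero).mp (right_ne_zero_of_mul (hdec ▸ ha₀pos.ne'))
  set A₀ : ℚˣ := Units.mk0 a₀ ha₀pos.ne'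
  set A₂ : ℚˣ := Units.mk0 a₂ ha₂
  have hA₀ : A₀ = natUnit a₁ * A₂ ^ 2 :=
    Units.ext (by simp [A₀, A₂, hdec, natUnit_val (Nat.cast_ne_zero.mp ha₁)])
  set g : ℚˣ ⧸ powSubgroup (2 ^ α) := QuotientGroup.mk A₀
  have hΓ : GammaMod (negOneAGroup (a₀ ^ h)) (2 ^ α) =
      Subgroup.closure {QuotientGroup.mk (-1), g ^ h} := by
    rw [GammaMod_negOneAGroup_s9 (pow_ne_zero h ha₀pos.ne'), ← QuotientGroup.mk_pow]
    congr 4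
    exact Units.ext (by simp [A₀])
  have hg : orderOf g = 2 ^ α := orderOf_mk_powSubgroup ha₀pos hnp (by positivity)
  have hε : (QuotientGroup.mk (-1) : ℚˣ ⧸ powSubgroup (2 ^ α)) ^ 2 = 1 := by
    rw [← QuotientGroup.mk_pow, neg_one_sq, QuotientGroup.mk_one]
  have hA₂ : (QuotientGroup.mk (A₂ ^ 2 ^ α) : ℚˣ ⧸ powSubgroup (2 ^ α)) = 1 :=
    (QuotientGroup.eq_one_iff _).mpr ⟨A₂, rfl⟩
  have hga₁ : g ^ 2 ^ (α - 1) = QuotientGroup.mk (natUnit a₁ ^ 2 ^ (α - 1)) := by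
    rw [← QuotientGroup.mk_pow, hA₀, mul_pow, ← pow_mul, mul_pow_sub_one hα₀ 2,
      QuotientGroup.mk_mul, hA₂, mul_one]
  have hneg (x : ℚˣ) : (QuotientGroup.mk (-x) : ℚˣ ⧸ powSubgroup (2 ^ α)) =
      QuotientGroup.mk (-1) * QuotientGroup.mk x := by
    rw [← QuotientGroup.mk_mul, neg_one_mul]
  have hdvd : 2 ^ α ∣ h ↔ α ≤ padicValNat 2 h := padicValNat_dvd_iff_le (by omega)
  rw [hΓ]
  refine ⟨fun hlt => ?_, fun hle => setOf_mem_closure_sq_eq_one_of_dvd hα₀ hg hε (hdvd.mpr hle)⟩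
  rw [setOf_mem_closure_sq_eq_one_of_not_dvd hα₀ hg hε (by omega), hga₁, ← hneg]

/-- **The 2-torsion of `⟨−1,a⟩(2^α)`**: it is `{1, −1, a₁^(2^(α−1)), −a₁^(2^(α−1))}`
(mod `(ℚ*)^(2^α)`) when `v₂(h) < α`, and `{1, −1}` when `v₂(h) ≥ α`. -/
theorem torsion_GammaMod_negOneA (a a₀ a₂ : ℚ) (h a₁ : ℕ)
    (ha : 0 < a) (ha1 : a ≠ 1) (ha₀pos : 0 < a₀)
    (hnp : ∀ (b : ℚ) (k : ℕ), 2 ≤ k → a₀ ≠ b ^ k)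
    (hh : 1 ≤ h) (hah : a = a₀ ^ h)
    (ha₁sf : Squarefree a₁) (ha₁1 : 1 < a₁) (ha₂pos : 0 < a₂)
    (hdec : a₀ = (a₁ : ℚ) * a₂ ^ 2) (α : ℕ) (hα : 1 ≤ α) :
    (padicValNat 2 h < α →
      {c : ℚˣ ⧸ powSubgroup (2 ^ α) | c ∈ GammaMod (negOneAGroup a) (2 ^ α) ∧ c ^ 2 = 1} =
        {1, QuotientGroup.mk (-1),
         QuotientGroup.mk (natUnit a₁ ^ 2 ^ (α - 1)),
         QuotientGroup.mk (-(natUnit a₁ ^ 2 ^ (α - 1)))}) ∧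
    (α ≤ padicValNat 2 h →
      {c : ℚˣ ⧸ powSubgroup (2 ^ α) | c ∈ GammaMod (negOneAGroup a) (2 ^ α) ∧ c ^ 2 = 1} =
        {1, QuotientGroup.mk (-1)}) :=
  torsion_GammaMod_negOneA_general a a₀ a₂ h a₁ ha₀pos hnp hh hah hdec α hα
end
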